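/- arXiv:1310.5479 — 8 statements merged into one kernel-verified Lean document; each statement's English description precedes it below -/
import Mathlib

section
/- Let P > 0, σ² > 0 and β > 0. Define the sequence (x_D)_{D≥0} by x_0 = 0 and x_D = P / ( σ² + βP/(1 + x_{D−1}) ) for D ≥ 1. Then x_D converges, as D → ∞, to L = (1−β)P/(2σ²) − 1/2 + √( (1−β)²P²/(4σ⁴) + (1+β)P/(2σ²) + 1/4 ), and L is the unique nonnegative solution of x = P / ( σ² + βP/(1+x) ). -/
open Filter Topology

/-- **Convergence of the polynomial-expansion-detector SINR recursion.** For `P, σ², β > 0`,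
the recursion `x_0 = 0`, `x_D = P/(σ² + βP/(1 + x_{D−1}))` converges to
`L = (1−β)P/(2σ²) − 1/2 + √((1−β)²P²/(4σ⁴) + (1+β)P/(2σ²) + 1/4)`, and `L` is the unique
nonnegative solution of `x = P/(σ² + βP/(1+x))`. -/
theorem sinr_recursion_tendsto
    (P σ2 β : ℝ) (hP : 0 < P) (hσ : 0 < σ2) (hβ : 0 < β)
    (x : ℕ → ℝ) (hx0 : x 0 = 0)
    (hxrec : ∀ D : ℕ, x (D + 1) = P / (σ2 + β * P / (1 + x D))) :
    Tendsto x atTop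
      (𝓝 ((1 - β) * P / (2 * σ2) - 1 / 2 +
        Real.sqrt ((1 - β) ^ 2 * P ^ 2 / (4 * σ2 ^ 2) + (1 + β) * P / (2 * σ2) + 1 / 4))) ∧
    (0 ≤ (1 - β) * P / (2 * σ2) - 1 / 2 +
        Real.sqrt ((1 - β) ^ 2 * P ^ 2 / (4 * σ2 ^ 2) + (1 + β) * P / (2 * σ2) + 1 / 4)) ∧
    ((1 - β) * P / (2 * σ2) - 1 / 2 +
        Real.sqrt ((1 - β) ^ 2 * P ^ 2 / (4 * σ2 ^ 2) + (1 + β) * P / (2 * σ2) + 1 / 4)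
      = P / (σ2 + β * P / (1 +
        ((1 - β) * P / (2 * σ2) - 1 / 2 +
          Real.sqrt ((1 - β) ^ 2 * P ^ 2 / (4 * σ2 ^ 2) + (1 + β) * P / (2 * σ2) + 1 / 4))))) ∧
    (∀ L' : ℝ, 0 ≤ L' → L' = P / (σ2 + β * P / (1 + L')) →
      L' = (1 - β) * P / (2 * σ2) - 1 / 2 +
        Real.sqrt ((1 - β) ^ 2 * P ^ 2 / (4 * σ2 ^ 2) + (1 + β) * P / (2 * σ2) + 1 / 4)) := by
  set a : ℝ := (1 - β) * P / (2 * σ2) - 1 / 2 with ha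
  set s : ℝ := Real.sqrt ((1 - β) ^ 2 * P ^ 2 / (4 * σ2 ^ 2) + (1 + β) * P / (2 * σ2) + 1 / 4)
    with hs
  set L : ℝ := a + s with hL
  clear_value L s a
  -- the radicand equals a² + P/σ2
  have harg : (1 - β) ^ 2 * P ^ 2 / (4 * σ2 ^ 2) + (1 + β) * P / (2 * σ2) + 1 / 4
      = a ^ 2 + P / σ2 := by
    rw [ha]; field_simp; ring
  have hargnn : (0:ℝ) ≤ (1 - β) ^ 2 * P ^ 2 / (4 * σ2 ^ 2) + (1 + β) * P / (2 * σ2) + 1 / 4 := by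
    rw [harg]; positivity
  have hs2 : s ^ 2 = a ^ 2 + P / σ2 := by
    rw [hs, Real.sq_sqrt hargnn, harg]
  have hsnn : 0 ≤ s := by rw [hs]; exact Real.sqrt_nonneg _
  have hPσ : 0 < P / σ2 := div_pos hP hσ
  have habs : |a| < s := by
    by_contra h
    push_neg at h
    have h2 := pow_le_pow_left₀ hsnn h 2
    rw [sq_abs] at h2
    nlinarith [hs2, hPσ]
  have hsgta : a < s := lt_of_le_of_lt (le_abs_self a) habs
  have hLpos : 0 < L := by
    have := neg_abs_le a
    rw [hL]; linarith
  have hb : σ2 + β * P - P = -2 * σ2 * a := by rw [ha]; field_simp; ring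
  -- L satisfies the quadratic
  have hquad : σ2 * L ^ 2 + (σ2 + β * P - P) * L - P = 0 := by
    have hPs : σ2 * (P / σ2) = P := by field_simp
    rw [hb, hL]
    linear_combination σ2 * hs2 + hPs
  -- fixed point iff quadratic (for y ≥ 0)
  have key : ∀ y : ℝ, 0 ≤ y → (y = P / (σ2 + β * P / (1 + y)) ↔
      σ2 * y ^ 2 + (σ2 + β * P - P) * y - P = 0) := by
    intro y hy
    have h1y : (0:ℝ) < 1 + y := by linarith
    have hd2 : 0 < σ2 * (1 + y) + β * P := by positivity
    have hrw : σ2 + β * P / (1 + y) = (σ2 * (1 + y) + β * P) / (1 + y) := by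
      field_simp
    rw [hrw, div_div_eq_mul_div, eq_div_iff hd2.ne']
    constructor <;> intro h <;> linear_combination h
  have hLfix : L = P / (σ2 + β * P / (1 + L)) := (key L hLpos.le).2 hquad
  -- uniqueness
  have huniq : ∀ L' : ℝ, 0 ≤ L' → L' = P / (σ2 + β * P / (1 + L')) → L' = L := by
    intro y hy hfy
    have hq := (key y hy).1 hfy
    have hfac : (y - L) * (σ2 * (y + L) + (σ2 + β * P - P)) = 0 := by
      linear_combination hq - hquad
    have hpos : 0 < σ2 * (y + L) + (σ2 + β * P - P) := by
      rw [hb, hL]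
      nlinarith [mul_pos hσ (sub_pos.2 hsgta), mul_nonneg hσ.le hy]
    rcases mul_eq_zero.1 hfac with h | h
    · linarith
    · linarith
  -- monotonicity helper: f is monotone on [0, ∞)
  have hmono : ∀ u v : ℝ, 0 ≤ u → u ≤ v →
      P / (σ2 + β * P / (1 + u)) ≤ P / (σ2 + β * P / (1 + v)) := by
    intro u v hu huv
    have h1u : (0:ℝ) < 1 + u := by linarith
    have h1v : (0:ℝ) < 1 + v := by linarith
    have hdv : 0 < σ2 + β * P / (1 + v) := by positivity
    have hdu : β * P / (1 + v) ≤ β * P / (1 + u) :=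
      div_le_div_of_nonneg_left (by positivity) h1u (by linarith)
    exact div_le_div_of_nonneg_left hP.le hdv (by linarith)
  -- invariant: 0 ≤ x D ∧ x D ≤ x (D+1) ∧ x D ≤ L
  have hinv : ∀ D : ℕ, 0 ≤ x D ∧ x D ≤ x (D + 1) ∧ x D ≤ L := by
    intro D
    induction D with
    | zero =>
      refine ⟨by rw [hx0], ?_, by rw [hx0]; exact hLpos.le⟩
      rw [hx0, hxrec, hx0]
      positivity
    | succ n ih =>
      obtain ⟨h0, hmn, hle⟩ := ih
      have h0' : 0 ≤ x (n + 1) := by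
        rw [hxrec]
        have h1 : (0:ℝ) < 1 + x n := by linarith
        positivity
      refine ⟨h0', ?_, ?_⟩
      · rw [hxrec n, hxrec (n+1)]; exact hmono _ _ h0 hmn
      · rw [hxrec n]
        calc P / (σ2 + β * P / (1 + x n)) ≤ P / (σ2 + β * P / (1 + L)) :=
              hmono _ _ h0 hle
          _ = L := hLfix.symm
    -- convergence
  have hmonox : Monotone x := monotone_nat_of_le_succ fun n => (hinv n).2.1
  have hbdd : BddAbove (Set.range x) := ⟨L, by rintro _ ⟨n, rfl⟩; exact (hinv n).2.2⟩
  set c : ℝ := ⨆ n, x n with hc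
  have htend : Tendsto x atTop (𝓝 c) := tendsto_atTop_ciSup hmonox hbdd
  have hc0 : 0 ≤ c := by
    rw [← hx0]; exact le_ciSup hbdd 0
  have h1c : (0:ℝ) < 1 + c := by linarith
  have hdc : 0 < σ2 + β * P / (1 + c) := by positivity
  have htend' : Tendsto (fun D => x (D + 1)) atTop (𝓝 c) :=
    htend.comp (tendsto_add_atTop_nat 1)
  have htendf : Tendsto (fun D => P / (σ2 + β * P / (1 + x D))) atTop
      (𝓝 (P / (σ2 + β * P / (1 + c)))) := by
    apply Tendsto.div tendsto_const_nhds
    · exact tendsto_const_nhds.add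
        (Tendsto.div tendsto_const_nhds (tendsto_const_nhds.add htend) h1c.ne')
    · exact hdc.ne'
  have hceq : c = P / (σ2 + β * P / (1 + c)) := by
    apply tendsto_nhds_unique htend'
    have : (fun D => x (D + 1)) = fun D => P / (σ2 + β * P / (1 + x D)) := by
      funext D; exact hxrec D
    rw [this]; exact htendf
  have hcL : c = L := huniq c hc0 hceq
  exact ⟨hcL ▸ htend, hLpos.le, hLfix, huniq⟩
end

section
/- Let σ² > 0, β > 0, and let μ be a probability measure on [0,∞). Then there exists exactly one η ∈ (0,∞) satisfying the Tse–Hanly fixed-point equation η = 1 / ( σ² + β ∫ p/(1 + pη) dμ(p) ), and this η satisfies η ≤ 1/σ². -/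
open MeasureTheory

lemma th_aux_mono {x y : ℝ} (hx : 0 ≤ x) (hxy : x ≤ y) :
    x / (1 + x) ≤ y / (1 + y) := by
  rw [div_le_div_iff₀ (by linarith) (by linarith)]
  nlinarith

lemma th_aux_bound {x : ℝ} (hx : 0 ≤ x) : |x / (1 + x)| ≤ 1 := by
  rw [abs_of_nonneg (div_nonneg hx (by linarith)), div_le_one (by linarith)]
  linarith

/-- **The Tse–Hanly fixed-point equation.** For `σ² > 0`, `β > 0` and a probability measure `μ`
on `[0,∞)`, there is exactly one `η ∈ (0,∞)` with `η = 1/(σ² + β ∫ p/(1+pη) dμ(p))`, and it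
satisfies `η ≤ 1/σ²`. -/
theorem tse_hanly_fixed_point
    (σ2 β : ℝ) (hσ : 0 < σ2) (hβ : 0 < β)
    (μ : Measure ℝ) [IsProbabilityMeasure μ] (hμ : μ (Set.Iio 0) = 0) :
    (∃! η : ℝ, 0 < η ∧ η = 1 / (σ2 + β * ∫ p, p / (1 + p * η) ∂μ)) ∧
    (∀ η : ℝ, 0 < η → η = 1 / (σ2 + β * ∫ p, p / (1 + p * η) ∂μ) → η ≤ 1 / σ2) := by
  have hae : ∀ᵐ p ∂μ, 0 ≤ p := by
    rw [ae_iff]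
    simpa [not_le, Set.Iio] using hμ
  set J : ℝ → ℝ := fun η => ∫ p, p * η / (1 + p * η) ∂μ with hJ
  set f : ℝ → ℝ := fun η => η * σ2 + β * J η with hf
  have hmeas : ∀ η : ℝ, AEStronglyMeasurable (fun p => p * η / (1 + p * η)) μ := by
    intro η
    exact ((measurable_id.mul_const η).div
      (measurable_const.add (measurable_id.mul_const η))).aestronglyMeasurable
  have hint : ∀ η : ℝ, 0 ≤ η → Integrable (fun p => p * η / (1 + p * η)) μ := by
    intro η hη
    refine (integrable_const (1 : ℝ)).mono' (hmeas η) ?_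
    filter_upwards [hae] with p hp
    rw [Real.norm_eq_abs]; exact th_aux_bound (mul_nonneg hp hη)
  have hJ0 : ∀ η : ℝ, 0 ≤ η → 0 ≤ J η := by
    intro η hη
    refine integral_nonneg_of_ae ?_
    filter_upwards [hae] with p hp
    have := mul_nonneg hp hη
    exact div_nonneg this (by linarith)
  have hJmono : ∀ η₁ η₂ : ℝ, 0 ≤ η₁ → η₁ ≤ η₂ → J η₁ ≤ J η₂ := by
    intro η₁ η₂ h1 h12
    refine integral_mono_ae (hint η₁ h1) (hint η₂ (h1.trans h12)) ?_
    filter_upwards [hae] with p hp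
    exact th_aux_mono (mul_nonneg hp h1) (mul_le_mul_of_nonneg_left h12 hp)
  have hfmono : StrictMonoOn f (Set.Ici (0 : ℝ)) := by
    intro x hx y hy hxy
    have h1 : x * σ2 < y * σ2 := by
      exact mul_lt_mul_of_pos_right hxy hσ
    have h2 : J x ≤ J y := hJmono x y hx hxy.le
    simp only [hf]
    nlinarith
  -- the key equivalence
  have hIpos : ∀ η : ℝ, 0 < η → 0 ≤ ∫ p, p / (1 + p * η) ∂μ := by
    intro η hη
    refine integral_nonneg_of_ae ?_
    filter_upwards [hae] with p hp
    have := mul_nonneg hp hη.le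
    exact div_nonneg hp (by linarith)
  have hrel : ∀ η : ℝ, η * ∫ p, p / (1 + p * η) ∂μ = J η := by
    intro η
    rw [hJ, ← integral_const_mul]
    congr 1
    ext p
    ring
  have hiff : ∀ η : ℝ, 0 < η →
      ((η = 1 / (σ2 + β * ∫ p, p / (1 + p * η) ∂μ)) ↔ f η = 1) := by
    intro η hη
    have hD : 0 < σ2 + β * ∫ p, p / (1 + p * η) ∂μ := by
      have := hIpos η hη
      nlinarith
    rw [eq_div_iff hD.ne']
    constructor
    · intro h
      have : η * σ2 + β * (η * ∫ p, p / (1 + p * η) ∂μ) = 1 := by linarith [h]; 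
      rw [hrel η] at this
      simpa [hf] using this
    · intro h
      have h' : η * σ2 + β * (η * ∫ p, p / (1 + p * η) ∂μ) = 1 := by
        rw [hrel η]; simpa [hf] using h
      nlinarith [h']
  -- continuity of f on [0, 1/σ2]
  have hcont : ContinuousOn f (Set.Icc 0 (1 / σ2)) := by
    have hJc : ContinuousOn J (Set.Icc 0 (1 / σ2)) := by
      refine continuousOn_of_dominated (fun η _ => hmeas η) ?_ (integrable_const 1) ?_
      · intro η hη
        filter_upwards [hae] with p hp
        rw [Real.norm_eq_abs]; exact th_aux_bound (mul_nonneg hp hη.1)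
      · filter_upwards [hae] with p hp
        refine ContinuousOn.div (by fun_prop) (by fun_prop) ?_
        intro η hη
        have := mul_nonneg hp hη.1
        linarith
    exact ((continuousOn_id.mul continuousOn_const).add (continuousOn_const.mul hJc))
  -- values at endpoints
  have hf0 : f 0 = 0 := by simp [hf, hJ]
  have hfb : 1 ≤ f (1 / σ2) := by
    have : (1 / σ2) * σ2 = 1 := by field_simp
    have h2 := hJ0 (1 / σ2) (by positivity)
    simp only [hf]
    nlinarith
  -- existence via IVT
  have hsub : Set.Icc (f 0) (f (1 / σ2)) ⊆ f '' Set.Icc 0 (1 / σ2) :=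
    intermediate_value_Icc (by positivity) hcont
  obtain ⟨η, hηmem, hηf⟩ := hsub ⟨by rw [hf0]; norm_num, hfb⟩
  have hηpos : 0 < η := by
    rcases lt_or_eq_of_le hηmem.1 with h | h
    · exact h
    · exfalso; rw [← h] at hηf; rw [hf0] at hηf; norm_num at hηf
  constructor
  · refine ⟨η, ⟨hηpos, (hiff η hηpos).mpr hηf⟩, ?_⟩
    intro η' ⟨hη'pos, hη'eq⟩
    have hη'f : f η' = 1 := (hiff η' hη'pos).mp hη'eq
    exact hfmono.injOn (Set.mem_Ici.mpr hη'pos.le) (Set.mem_Ici.mpr hηpos.le)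
      (by rw [hη'f, hηf])
  · intro t htpos hteq
    have htf : f t = 1 := (hiff t htpos).mp hteq
    have h2 := hJ0 t htpos.le
    have : t * σ2 ≤ 1 := by
      simp only [hf] at htf
      nlinarith
    rw [le_div_iff₀ hσ]
    linarith
end

section
/- For every β > 0 and every integer m ≥ 1, ∫_{(1−√β)²}^{(1+√β)²} x^m · √(4β−(x−1−β)²)/(2πx) dx = (1/m) Σ_{i=1}^{m} binom(m,i)·binom(m,i−1)·β^i. Equivalently, the m-th moment of the Marčenko–Pastur measure μ_β equals (1/m) Σ_{i=1}^{m} binom(m,i)·binom(m,i−1)·β^i for every m ≥ 1. -/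
/-!
Substituting `x = 1 + β + 2√β cos θ` turns the `m`-th moment into
`(2β/π) ∫₀^π (1 + β + 2√β cos θ)ⁿ sin² θ dθ` with `n = m - 1`. On the unit circle `z = e^{iθ}`
this integrand is `|(1 + √β z)ⁿ (z² - 1)|² / 4`, so Parseval's identity over a full period
evaluates the integral as a sum of squared coefficients,
`(π/2) Σₖ (C(n,k)² βᵏ - C(n,k) C(n,k+2) βᵏ⁺¹)`. The Narayana identity
`(n+1) (C(n,k+1)² - C(n,k) C(n,k+2)) = C(n+1,k+1) C(n+1,k+2)` turns this into the stated sum.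
-/

open Real Finset intervalIntegral
open MeasureTheory (volume)

theorem integral_mul_sqrt_sq_sub_sq {g : ℝ → ℝ} (hg : Continuous g) (c : ℝ) {r : ℝ}
    (hr : 0 ≤ r) :
    ∫ x in (c - r)..(c + r), g x * √(r ^ 2 - (x - c) ^ 2) =
      ∫ θ in 0..π, g (c + r * cos θ) * (r * sin θ) ^ 2 := by
  have hsubst := integral_comp_mul_deriv (a := 0) (b := π) (f := fun θ => c + r * cos θ)
    (f' := fun θ => -(r * sin θ)) (g := fun x => g x * √(r ^ 2 - (x - c) ^ 2))
    (fun θ _ => by simpa using ((hasDerivAt_cos θ).const_mul r).const_add c)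
    (by fun_prop) (by fun_prop)
  simp only [cos_zero, cos_pi, mul_one, mul_neg, ← sub_eq_add_neg] at hsubst
  rw [integral_symm, ← hsubst, ← integral_neg]
  refine integral_congr fun θ hθ => ?_
  rw [Set.uIcc_of_le pi_pos.le] at hθ
  have hsin : 0 ≤ r * sin θ := mul_nonneg hr (sin_nonneg_of_nonneg_of_le_pi hθ.1 hθ.2)
  have hsq : r ^ 2 - (c + r * cos θ - c) ^ 2 = (r * sin θ) ^ 2 := by
    linear_combination r ^ 2 * (sin_sq_add_cos_sq θ).symm
  simp only [Function.comp, neg_neg, hsq, sqrt_sq hsin]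
  ring

theorem integral_zero_two_mul_of_symm {f : ℝ → ℝ} {a : ℝ}
    (hf : IntervalIntegrable f volume 0 a) (hsymm : ∀ x, f (2 * a - x) = f x) :
    ∫ x in 0..2 * a, f x = 2 * ∫ x in 0..a, f x := by
  have hreflect : ∫ x in a..2 * a, f x = ∫ x in 0..a, f x := by
    have h := integral_comp_sub_left (a := 0) (b := a) f (2 * a)
    rw [show 2 * a - a = a by ring, sub_zero] at h
    simpa only [hsymm] using h.symm
  have hf' : IntervalIntegrable f volume a (2 * a) := by
    have h := hf.comp_sub_left (2 * a)
    rw [sub_zero, show 2 * a - a = a by ring] at h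
    simpa only [hsymm] using h.symm
  rw [← integral_add_adjacent_intervals hf hf', hreflect, two_mul]

theorem sum_range_add_two_ite_two_le {M : Type*} [AddCommMonoid M] (g : ℕ → M) (n : ℕ) :
    ∑ k ∈ range (n + 2), (if 2 ≤ k then g k else 0) = ∑ k ∈ range n, g (k + 2) := by
  simp [sum_range_succ']

section MulSqSubOne

variable {R : Type*} [CommRing R] (a : ℕ → R) {n : ℕ} (ha : ∀ k, n < k → a k = 0)
include ha

theorem sum_range_mul_sq_sub_one (z : R) :
    (∑ k ∈ range (n + 1), a k * z ^ k) * (z ^ 2 - 1) =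
      ∑ k ∈ range (n + 3), ((if 2 ≤ k then a (k - 2) else 0) - a k) * z ^ k := by
  have htail : ∑ k ∈ range (n + 3), a k * z ^ k = ∑ k ∈ range (n + 1), a k * z ^ k := by
    simp [sum_range_succ _ (n + 2), sum_range_succ _ (n + 1), ha]
  simp only [sub_mul, sum_sub_distrib, ite_mul, zero_mul, htail]
  rw [sum_range_add_two_ite_two_le, mul_sub, mul_one, sum_mul]
  simp [mul_assoc, ← pow_add]

theorem sum_range_sq_coeff_mul_sq_sub_one :
    ∑ k ∈ range (n + 3), ((if 2 ≤ k then a (k - 2) else 0) - a k) ^ 2 =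
      2 * ∑ k ∈ range (n + 1), a k ^ 2 - 2 * ∑ k ∈ range (n + 1), a k * a (k + 2) := by
  have htail : ∑ k ∈ range (n + 3), a k ^ 2 = ∑ k ∈ range (n + 1), a k ^ 2 := by
    simp [sum_range_succ _ (n + 2), sum_range_succ _ (n + 1), ha]
  simp only [sub_sq, sum_add_distrib, sum_sub_distrib, ite_pow, ite_mul, zero_pow two_ne_zero,
    zero_mul, mul_assoc, ← mul_sum, htail, sum_range_add_two_ite_two_le, Nat.add_sub_cancel]
  ring

end MulSqSubOne

section Fourier

open Complex ComplexConjugate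

theorem integral_cexp_int_mul_I (d : ℤ) :
    ∫ θ in (0 : ℝ)..2 * π, cexp (d * θ * I) = if d = 0 then (2 * π : ℂ) else 0 := by
  split_ifs with hd
  · simp [hd]
  have hdI : (d : ℂ) * I ≠ 0 := by simp [hd]
  have hperiod : cexp (d * I * (2 * π : ℝ)) = 1 := by
    simpa [mul_assoc, mul_comm, mul_left_comm] using exp_int_mul_two_pi_mul_I d
  simp_rw [mul_right_comm _ _ I]
  rw [integral_exp_mul_complex hdI, hperiod]
  simp

theorem integral_cexp_pow_mul_conj_pow (k l : ℕ) :
    ∫ θ in (0 : ℝ)..2 * π, cexp (θ * I) ^ k * conj (cexp (θ * I) ^ l) =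
      if k = l then (2 * π : ℂ) else 0 := by
  have h (θ : ℝ) :
      cexp (θ * I) ^ k * conj (cexp (θ * I) ^ l) = cexp (((k - l : ℤ) : ℂ) * θ * I) := by
    rw [map_pow, ← exp_conj, ← Complex.exp_nat_mul, ← Complex.exp_nat_mul,
      ← Complex.exp_add]
    congr 1
    simp only [map_mul, conj_ofReal, conj_I, Int.cast_sub, Int.cast_natCast]
    ring
  simp_rw [h, integral_cexp_int_mul_I, sub_eq_zero, Nat.cast_inj]

theorem integral_normSq_sum_mul_cexp_pow (c : ℕ → ℂ) (N : ℕ) :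
    ∫ θ in (0 : ℝ)..2 * π, normSq (∑ k ∈ range N, c k * cexp (θ * I) ^ k) =
      2 * π * ∑ k ∈ range N, normSq (c k) := by
  have hint (k l : ℕ) : IntervalIntegrable
      (fun θ : ℝ => cexp (θ * I) ^ k * conj (cexp (θ * I) ^ l)) volume 0 (2 * π) :=
    Continuous.intervalIntegrable (by fun_prop) _ _
  have hexpand (θ : ℝ) : (normSq (∑ k ∈ range N, c k * cexp (θ * I) ^ k) : ℂ) =
      ∑ k ∈ range N, ∑ l ∈ range N,
        c k * conj (c l) * (cexp (θ * I) ^ k * conj (cexp (θ * I) ^ l)) := by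
    simp_rw [← mul_conj, map_sum, map_mul, sum_mul_sum]
    exact sum_congr rfl fun k _ => sum_congr rfl fun l _ => by ring
  apply ofReal_injective
  rw [← integral_ofReal]
  simp_rw [hexpand]
  rw [integral_finsetSum fun k _ => Continuous.intervalIntegrable (by fun_prop) _ _]
  simp_rw [integral_finsetSum fun l _ => (hint _ l).const_mul _, integral_const_mul,
    integral_cexp_pow_mul_conj_pow, mul_ite, mul_zero, sum_ite_eq]
  rw [sum_congr rfl fun k hk => if_pos hk]
  push_cast
  rw [mul_sum]
  exact sum_congr rfl fun k _ => by rw [← mul_conj]; ring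

theorem one_add_sq_add_two_mul_cos_pow_mul_sin_sq_eq_normSq (n : ℕ) (s θ : ℝ) :
    (1 + s ^ 2 + 2 * s * Real.cos θ) ^ n * Real.sin θ ^ 2 =
      normSq ((1 + s * cexp (θ * I)) ^ n * (cexp (θ * I) ^ 2 - 1)) / 4 := by
  have hfactor : normSq (1 + s * cexp (θ * I)) = 1 + s ^ 2 + 2 * s * Real.cos θ := by
    simp only [normSq_apply, add_re, one_re, mul_re, ofReal_re, exp_ofReal_mul_I_re, ofReal_im,
      exp_ofReal_mul_I_im, zero_mul, sub_zero, add_im, one_im, mul_im, add_zero, zero_add]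
    linear_combination s ^ 2 * Real.sin_sq_add_cos_sq θ
  have hsin : normSq (cexp (θ * I) ^ 2 - 1) = 4 * Real.sin θ ^ 2 := by
    simp only [normSq_apply, pow_two, sub_re, mul_re, exp_ofReal_mul_I_re, exp_ofReal_mul_I_im,
      one_re, sub_im, mul_im, one_im, sub_zero]
    linear_combination (Real.sin θ ^ 2 + Real.cos θ ^ 2 - 1) * Real.sin_sq_add_cos_sq θ
  rw [map_mul, map_pow, hfactor, hsin]
  ring

theorem integral_one_add_sq_add_two_mul_cos_pow_mul_sin_sq (n : ℕ) (s : ℝ) :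
    ∫ θ in 0..π, (1 + s ^ 2 + 2 * s * Real.cos θ) ^ n * Real.sin θ ^ 2 =
      π / 2 * (∑ k ∈ range (n + 1), (n.choose k : ℝ) ^ 2 * (s ^ 2) ^ k -
        ∑ k ∈ range (n + 1), (n.choose k : ℝ) * n.choose (k + 2) * (s ^ 2) ^ (k + 1)) := by
  set a : ℕ → ℝ := fun k => n.choose k * s ^ k
  have ha (k : ℕ) (hk : n < k) : a k = 0 := by simp [a, Nat.choose_eq_zero_of_lt hk]
  set c : ℕ → ℝ := fun k => (if 2 ≤ k then a (k - 2) else 0) - a k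
  have hcoeff (z : ℂ) :
      (1 + s * z) ^ n * (z ^ 2 - 1) = ∑ k ∈ range (n + 3), (c k : ℂ) * z ^ k := by
    have hbinom : (1 + s * z) ^ n = ∑ k ∈ range (n + 1), (a k : ℂ) * z ^ k := by
      rw [add_comm, add_pow]
      exact sum_congr rfl fun k _ => by simp only [a]; push_cast; ring
    have hc (k : ℕ) : (c k : ℂ) = (if 2 ≤ k then (a (k - 2) : ℂ) else 0) - a k := by
      simp only [c]; split_ifs <;> push_cast <;> rfl
    simp_rw [hbinom, hc]
    exact sum_range_mul_sq_sub_one _ (fun k hk => by rw [ha k hk, ofReal_zero]) z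
  have hsymm (θ : ℝ) :
      (1 + s ^ 2 + 2 * s * Real.cos (2 * π - θ)) ^ n * Real.sin (2 * π - θ) ^ 2 =
        (1 + s ^ 2 + 2 * s * Real.cos θ) ^ n * Real.sin θ ^ 2 := by
    rw [Real.cos_two_pi_sub, Real.sin_two_pi_sub, neg_sq]
  have hperiod := integral_zero_two_mul_of_symm ((by fun_prop : Continuous fun θ =>
    (1 + s ^ 2 + 2 * s * Real.cos θ) ^ n * Real.sin θ ^ 2).intervalIntegrable _ _) hsymm
  rw [← mul_right_inj' (two_ne_zero' ℝ), ← hperiod]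
  simp_rw [one_add_sq_add_two_mul_cos_pow_mul_sin_sq_eq_normSq, hcoeff]
  rw [integral_div, integral_normSq_sum_mul_cexp_pow]
  simp only [normSq_ofReal, ← pow_two, c, sum_range_sq_coeff_mul_sq_sub_one a ha, a]
  have hsq (k : ℕ) : ((n.choose k : ℝ) * s ^ k) ^ 2 = (n.choose k : ℝ) ^ 2 * (s ^ 2) ^ k := by
    ring
  have hcross (k : ℕ) : (n.choose k : ℝ) * s ^ k * (n.choose (k + 2) * s ^ (k + 2)) =
      n.choose k * n.choose (k + 2) * (s ^ 2) ^ (k + 1) := by ring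
  simp only [hsq, hcross]
  ring

end Fourier

theorem add_one_mul_choose_sq (n k : ℕ) :
    (n + 1) * n.choose (k + 1) ^ 2 =
      (n + 1).choose (k + 1) * (n + 1).choose (k + 2) +
        (n + 1) * n.choose k * n.choose (k + 2) := by
  rcases lt_or_ge n (k + 1) with hn | hkn
  · simp [Nat.choose_eq_zero_of_lt hn, Nat.choose_eq_zero_of_lt (by omega : n < k + 2),
      Nat.choose_eq_zero_of_lt (by omega : n + 1 < k + 2)]
  obtain ⟨j, rfl⟩ : ∃ j, n = k + 1 + j := ⟨n - (k + 1), by omega⟩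
  have h1 := Nat.choose_succ_right_eq (k + 1 + j) k
  have h2 := Nat.choose_succ_right_eq (k + 1 + j) (k + 1)
  have h3 := Nat.add_one_mul_choose_eq (k + 1 + j) k
  have h4 := Nat.add_one_mul_choose_eq (k + 1 + j) (k + 1)
  rw [show k + 1 + j - k = j + 1 by omega] at h1
  rw [show k + 1 + j - (k + 1) = j by omega] at h2
  set A := (k + 1 + j).choose k
  set B := (k + 1 + j).choose (k + 1)
  set F := (k + 1 + j + 1).choose (k + 2)
  -- after multiplying by `(k+1)²(k+2)`, h1–h4 express every binomial through `A`
  refine Nat.eq_of_mul_eq_mul_left (by positivity : 0 < (k + 1) ^ 2 * (k + 2)) ?_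
  zify at h1 h2 h3 h4 ⊢
  linear_combination
    ((k + j + 2) * (k + 2) * ((k + 1) * B + (j + 1) * A)
      - (k + j + 2 + (k + 1) * j) * (k + j + 2) * A) * h1
    + (k + 1) * F * (k + 2) * h3 + (k + 1) * (k + j + 2) * A * h4
    - (k + j + 2) * (k + 1) ^ 2 * A * h2

theorem sum_Icc_choose_mul_choose_sub_one_mul_pow (n : ℕ) (β : ℝ) :
    ∑ i ∈ Icc 1 (n + 1), ((n + 1).choose i : ℝ) * (n + 1).choose (i - 1) * β ^ i =
      (n + 1) * β * (∑ k ∈ range (n + 1), (n.choose k : ℝ) ^ 2 * β ^ k -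
        ∑ k ∈ range (n + 1), (n.choose k : ℝ) * n.choose (k + 2) * β ^ (k + 1)) := by
  have hterm (k : ℕ) : ((n + 1).choose (k + 2) : ℝ) * (n + 1).choose (k + 1) =
      (n + 1) * ((n.choose (k + 1) : ℝ) ^ 2 - n.choose k * n.choose (k + 2)) := by
    have := congrArg (Nat.cast : ℕ → ℝ) (add_one_mul_choose_sq n k)
    push_cast at this
    linear_combination -this
  have hshift (f : ℕ → ℝ) :
      ∑ i ∈ Icc 1 (n + 1), f i = ∑ k ∈ range (n + 1), f (k + 1) := by
    rw [range_eq_Ico, sum_Ico_add']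
    rfl
  have hbulk : ∑ k ∈ range n,
      ((n + 1).choose (k + 1 + 1) : ℝ) * (n + 1).choose (k + 1 + 1 - 1) * β ^ (k + 1 + 1) =
        (n + 1) * β * (∑ k ∈ range n, (n.choose (k + 1) : ℝ) ^ 2 * β ^ (k + 1) -
          ∑ k ∈ range n, (n.choose k : ℝ) * n.choose (k + 2) * β ^ (k + 1)) := by
    rw [← sum_sub_distrib, mul_sum]
    exact sum_congr rfl fun k _ => by rw [Nat.add_sub_cancel, hterm]; ring
  rw [hshift, sum_range_succ', hbulk, sum_range_succ' (fun k => (n.choose k : ℝ) ^ 2 * β ^ k),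
    sum_range_succ _ n, Nat.choose_eq_zero_of_lt (by omega : n < n + 2)]
  simp only [zero_add, tsub_self, Nat.choose_zero_right, Nat.choose_one_right, Nat.choose_self]
  push_cast
  ring

/-- **Moments of the Marčenko–Pastur law.** For every `β > 0` and integer `m ≥ 1`, the `m`-th
moment of the Marčenko–Pastur measure `μ_β` equals
`(1/m) Σ_{i=1}^{m} binom(m,i)·binom(m,i−1)·β^i`. -/
theorem marchenko_pastur_moments (β : ℝ) (hβ : 0 < β) (m : ℕ) (hm : 1 ≤ m) :
    (∫ x in ((1 - Real.sqrt β) ^ 2)..((1 + Real.sqrt β) ^ 2),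
        x ^ m * (Real.sqrt (4 * β - (x - 1 - β) ^ 2) / (2 * Real.pi * x)))
      = (1 / (m : ℝ)) * ∑ i ∈ Finset.Icc 1 m,
          (Nat.choose m i : ℝ) * (Nat.choose m (i - 1) : ℝ) * β ^ i := by
  obtain ⟨n, rfl⟩ : ∃ n, m = n + 1 := ⟨m - 1, by omega⟩
  set s := √β
  have hβs : β = s ^ 2 := (sq_sqrt hβ.le).symm
  have hdensity (x : ℝ) (hx : x ≠ 0) :
      x ^ (n + 1) * (√(4 * β - (x - 1 - β) ^ 2) / (2 * π * x)) =
        1 / (2 * π) * (x ^ n * √((2 * s) ^ 2 - (x - (1 + β)) ^ 2)) := by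
    rw [show (2 * s) ^ 2 = 4 * β by rw [hβs]; ring, show x - (1 + β) = x - 1 - β by ring]
    field_simp
    ring
  calc _ = 1 / (2 * π) * ∫ x in (1 + β - 2 * s)..(1 + β + 2 * s),
          x ^ n * √((2 * s) ^ 2 - (x - (1 + β)) ^ 2) := by
        rw [show (1 - s) ^ 2 = 1 + β - 2 * s by rw [hβs]; ring,
          show (1 + s) ^ 2 = 1 + β + 2 * s by rw [hβs]; ring, ← integral_const_mul]
        refine integral_congr_ae ?_
        filter_upwards [volume.ae_ne 0] with x hx _ using hdensity x hx
    _ = 1 / (2 * π) * ∫ θ in 0..π, (1 + β + 2 * s * cos θ) ^ n * (2 * s * sin θ) ^ 2 := by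
        rw [integral_mul_sqrt_sq_sub_sq (continuous_pow n) _ (by positivity)]
    _ = 2 * β / π * ∫ θ in 0..π, (1 + s ^ 2 + 2 * s * cos θ) ^ n * sin θ ^ 2 := by
        rw [← integral_const_mul, ← integral_const_mul]
        refine integral_congr fun θ _ => ?_
        rw [hβs]
        ring
    _ = _ := by
        rw [integral_one_add_sq_add_two_mul_cos_pow_mul_sin_sq, ← hβs,
          sum_Icc_choose_mul_choose_sub_one_mul_pow]
        push_cast
        field_simp
end

section
/- For every w ∈ (0,1), ∫_{−2}^{2} (1/(2π)) √(4−x²) / ( x − (w + 1/w) ) dx = −w. (Since the R-transform of a probability measure μ is characterized by G_μ(R_μ(w) + 1/w) = −w, where G_μ is the Stieltjes transform of μ, this identity states that the R-transform of the semicircle law is R(w) = w; note w + 1/w > 2 lies outside the support [−2,2].) -/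
/-!
For `0 < r < s` the function
`F x = √(r² - x²) - s · arcsin (x / r) - √(s² - r²) · arcsin ((r² - s x) / (r (s - x)))`
is a primitive of `√(r² - x²) / (x - s)` on `(-r, r)`. The Möbius argument of the second
arcsine maps `[-r, r]` onto `[-1, 1]`, with `∓r ↦ ±1`, so the fundamental theorem of calculus
gives
`∫_{-r}^{r} √(r² - x²) / (x - s) dx = π (√(s² - r²) - s)`.
For `r = 2` and `s = w + 1/w` we have `√(s² - 4) = 1/w - w`, so the integral is `-2πw`.
-/

open Real Set intervalIntegral

lemma HasDerivAt.arcsin {f : ℝ → ℝ} {f' x : ℝ} (hf : HasDerivAt f f' x) (hx : |f x| < 1) :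
    HasDerivAt (fun y => arcsin (f y)) (f' / √(1 - f x ^ 2)) x := by
  obtain ⟨hl, hr⟩ := abs_lt.mp hx
  exact ((hasDerivAt_arcsin hl.ne' hr.ne).comp x hf).congr_deriv
    (by rw [div_mul_eq_mul_div, one_mul])

section SemicircleStieltjes

variable {r s x : ℝ}

noncomputable def semicirclePrimitive (r s x : ℝ) : ℝ :=
  √(r ^ 2 - x ^ 2) - s * arcsin (x / r)
    - √(s ^ 2 - r ^ 2) * arcsin ((r ^ 2 - s * x) / (r * (s - x)))

lemma continuousOn_semicirclePrimitive (hr : 0 < r) (hs : r < s) :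
    ContinuousOn (semicirclePrimitive r s) (Icc (-r) r) := by
  have hden : ∀ x ∈ Icc (-r) r, r * (s - x) ≠ 0 := fun x hx =>
    (mul_pos hr (by linarith [hx.2])).ne'
  unfold semicirclePrimitive
  fun_prop (disch := assumption)

lemma hasDerivAt_sqrt_sq_sub_sq (hx : x ∈ Ioo (-r) r) :
    HasDerivAt (fun y => √(r ^ 2 - y ^ 2)) (-x / √(r ^ 2 - x ^ 2)) x := by
  have hpos : 0 < r ^ 2 - x ^ 2 := by nlinarith [hx.1, hx.2]
  convert ((hasDerivAt_pow 2 x).const_sub (r ^ 2)).sqrt hpos.ne' using 1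
  field_simp
  ring

lemma hasDerivAt_arcsin_div (hx : x ∈ Ioo (-r) r) :
    HasDerivAt (fun y => arcsin (y / r)) (1 / √(r ^ 2 - x ^ 2)) x := by
  have hr : 0 < r := by linarith [hx.1, hx.2]
  have habs : |x / r| < 1 := by
    rw [abs_div, abs_of_pos hr, div_lt_one hr, abs_lt]; exact hx
  have hsqrt : √(1 - (x / r) ^ 2) = √(r ^ 2 - x ^ 2) / r := by
    rw [show 1 - (x / r) ^ 2 = (r ^ 2 - x ^ 2) / r ^ 2 by field_simp, sqrt_div' _ (sq_nonneg r),
      sqrt_sq hr.le]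
  refine (((hasDerivAt_id' x).div_const r).arcsin habs).congr_deriv ?_
  rw [hsqrt]
  field_simp

lemma hasDerivAt_arcsin_moebius (hs : r < s) (hx : x ∈ Ioo (-r) r) :
    HasDerivAt (fun y => arcsin ((r ^ 2 - s * y) / (r * (s - y))))
      (-√(s ^ 2 - r ^ 2) / ((s - x) * √(r ^ 2 - x ^ 2))) x := by
  have hr : 0 < r := by linarith [hx.1, hx.2]
  have hden : 0 < r * (s - x) := mul_pos hr (by linarith [hx.2])
  have hq : 0 < √(s ^ 2 - r ^ 2) := sqrt_pos.mpr (by nlinarith)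
  have hx2 : 0 < r ^ 2 - x ^ 2 := by nlinarith [hx.1, hx.2]
  have hR : 0 < √(r ^ 2 - x ^ 2) := sqrt_pos.mpr hx2
  have hq2 : √(s ^ 2 - r ^ 2) ^ 2 = s ^ 2 - r ^ 2 := sq_sqrt (by nlinarith)
  have hR2 : √(r ^ 2 - x ^ 2) ^ 2 = r ^ 2 - x ^ 2 := sq_sqrt hx2.le
  set q := √(s ^ 2 - r ^ 2)
  set R := √(r ^ 2 - x ^ 2)
  have hsx : s - x ≠ 0 := by linarith [hx.2]
  have hu : HasDerivAt (fun y => (r ^ 2 - s * y) / (r * (s - y)))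
      (-q ^ 2 / (r * (s - x) ^ 2)) x := by
    refine ((((hasDerivAt_id' x).const_mul s).const_sub (r ^ 2)).div
      (((hasDerivAt_id' x).const_sub s).const_mul r) hden.ne').congr_deriv ?_
    field_simp
    rw [hq2]
    ring
  have hu2 : 1 - ((r ^ 2 - s * x) / (r * (s - x))) ^ 2 = (q * R / (r * (s - x))) ^ 2 := by
    rw [div_pow (q * R), mul_pow, hq2, hR2]
    field_simp
    ring
  have habs : |(r ^ 2 - s * x) / (r * (s - x))| < 1 := by
    rw [← sq_lt_one_iff_abs_lt_one]
    nlinarith [hu2, show 0 < q * R / (r * (s - x)) by positivity]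
  refine (hu.arcsin habs).congr_deriv ?_
  rw [hu2, sqrt_sq (by positivity)]
  field_simp

lemma hasDerivAt_semicirclePrimitive (hs : r < s) (hx : x ∈ Ioo (-r) r) :
    HasDerivAt (semicirclePrimitive r s) (√(r ^ 2 - x ^ 2) / (x - s)) x := by
  have hR : 0 < √(r ^ 2 - x ^ 2) := sqrt_pos.mpr (by nlinarith [hx.1, hx.2])
  have hq : √(s ^ 2 - r ^ 2) ^ 2 = s ^ 2 - r ^ 2 := sq_sqrt (by nlinarith [hx.1, hx.2])
  have hR2 : √(r ^ 2 - x ^ 2) ^ 2 = r ^ 2 - x ^ 2 := sq_sqrt (by nlinarith [hx.1, hx.2])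
  have hsx : s - x ≠ 0 := by linarith [hx.2]
  have hxs : x - s ≠ 0 := by linarith [hx.2]
  refine (((hasDerivAt_sqrt_sq_sub_sq hx).sub ((hasDerivAt_arcsin_div hx).const_mul s)).sub
    ((hasDerivAt_arcsin_moebius hs hx).const_mul √(s ^ 2 - r ^ 2))).congr_deriv ?_
  field_simp
  linear_combination (x - s) * hq + (x - s) * hR2

theorem integral_sqrt_sq_sub_sq_div_sub (hr : 0 < r) (hs : r < s) :
    ∫ x in -r..r, √(r ^ 2 - x ^ 2) / (x - s) = π * (√(s ^ 2 - r ^ 2) - s) := by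
  have hint :
      IntervalIntegrable (fun x => √(r ^ 2 - x ^ 2) / (x - s)) MeasureTheory.volume (-r) r := by
    refine ContinuousOn.intervalIntegrable ?_
    have : ∀ x ∈ uIcc (-r) r, x - s ≠ 0 := fun x hx => by
      rw [uIcc_of_le (by linarith)] at hx; linarith [hx.2]
    fun_prop (disch := assumption)
  rw [integral_eq_sub_of_hasDerivAt_of_le (by linarith) (continuousOn_semicirclePrimitive hr hs)
    (fun x hx => hasDerivAt_semicirclePrimitive hs hx) hint]
  have hsr : s - r ≠ 0 := by linarith
  have hright : (r ^ 2 - s * r) / (r * (s - r)) = -1 := by field_simp; ring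
  have hleft : (r ^ 2 - s * -r) / (r * (s - -r)) = 1 := by
    rw [div_eq_one_iff_eq (mul_pos hr (by linarith)).ne']; ring
  simp only [semicirclePrimitive, hright, hleft, div_self hr.ne', neg_div, arcsin_one,
    arcsin_neg, neg_sq, sub_self, sqrt_zero]
  ring

end SemicircleStieltjes

lemma sqrt_add_one_div_sq_sub_four {w : ℝ} (hw0 : 0 < w) (hw1 : w ≤ 1) :
    √((w + 1 / w) ^ 2 - 2 ^ 2) = 1 / w - w := by
  have hpos : 0 ≤ 1 / w - w := by
    rw [sub_nonneg, le_div_iff₀ hw0]; nlinarith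
  rw [← sqrt_sq hpos]
  congr 1
  ring_nf
  field_simp
  ring

lemma two_lt_add_one_div {w : ℝ} (hw0 : 0 < w) (hw1 : w ≠ 1) : 2 < w + 1 / w := by
  rw [← sub_pos, show w + 1 / w - 2 = (1 - w) ^ 2 / w by field_simp; ring]
  exact div_pos (sq_pos_of_ne_zero (sub_ne_zero.mpr hw1.symm)) hw0

/-- **R-transform of the semicircle law is `R(w) = w`.** For every `w ∈ (0,1)`,
`∫_{−2}^{2} (1/(2π)) √(4−x²) / (x − (w + 1/w)) dx = −w`; i.e. the Stieltjes transform of the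
semicircle law satisfies `G(R(w) + 1/w) = −w` with `R(w) = w`. -/
theorem semicircle_R_transform (w : ℝ) (hw0 : 0 < w) (hw1 : w < 1) :
    (∫ x in (-2 : ℝ)..2,
        (1 / (2 * Real.pi)) * Real.sqrt (4 - x ^ 2) / (x - (w + 1 / w))) = -w := by
  have key := integral_sqrt_sq_sub_sq_div_sub two_pos (two_lt_add_one_div hw0 hw1.ne)
  rw [sqrt_add_one_div_sq_sub_four hw0 hw1.le] at key
  norm_num only at key
  simp only [mul_div_assoc, integral_const_mul, key]
  field_simp
  ring
end

section
/- For every w > 0, ∫_{−2}^{2} (1/(π√(4−x²))) · 1/( x − √(1+4w²)/w ) dx = −w. -/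
/-!
The Möbius map `g x = (4 - s x) / (2 (s - x))` sends `[-2, 2]` onto `[-1, 1]`, swapping the
endpoints, and satisfies `1 - g² = (s² - 4)(4 - x²) / (2 (s - x))²`. Hence
`arcsin ∘ g / (π √(s² - 4))` is a primitive of the arcsine density times `(x - s)⁻¹`, and the
Stieltjes transform of the arcsine law at `s > 2` is `-1 / √(s² - 4)`. At `s = √(1 + 4w²) / w`
one has `s² - 4 = 1 / w²`.
-/

open Real Set MeasureTheory intervalIntegral

theorem integral_eq_sub_of_hasDerivAt_of_nonpos {f f' : ℝ → ℝ} {a b : ℝ} (hab : a ≤ b)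
    (hcont : ContinuousOn f (Icc a b)) (hderiv : ∀ x ∈ Ioo a b, HasDerivAt f (f' x) x)
    (hnonpos : ∀ x ∈ Ioo a b, f' x ≤ 0) :
    ∫ x in a..b, f' x = f b - f a := by
  have hint : IntegrableOn (fun x => -f' x) (Ioc a b) :=
    integrableOn_deriv_of_nonneg hcont.neg (fun x hx => (hderiv x hx).neg)
      fun x hx => neg_nonneg.2 (hnonpos x hx)
  refine integral_eq_sub_of_hasDerivAt_of_le hab hcont hderiv ?_
  simpa [Pi.neg_def] using ((intervalIntegrable_iff_integrableOn_Ioc_of_le hab).2 hint).neg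

theorem one_sub_sq_mobius {s x : ℝ} (hxs : x ≠ s) :
    1 - ((4 - s * x) / (2 * (s - x))) ^ 2 = (s ^ 2 - 4) * (4 - x ^ 2) / (2 * (s - x)) ^ 2 := by
  have : s - x ≠ 0 := sub_ne_zero.2 hxs.symm
  field_simp
  ring

theorem hasDerivAt_mobius {s x : ℝ} (hxs : x ≠ s) :
    HasDerivAt (fun x => (4 - s * x) / (2 * (s - x))) (-(s ^ 2 - 4) / (2 * (s - x) ^ 2)) x := by
  have : s - x ≠ 0 := sub_ne_zero.2 hxs.symm
  refine ((((hasDerivAt_id' x).const_mul s).const_sub 4).fun_div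
    (((hasDerivAt_id' x).const_sub s).const_mul 2) (by simpa using this)).congr_deriv ?_
  field_simp
  ring

theorem hasDerivAt_arcsin_mobius {s x : ℝ} (hs : 2 < s) (hx : x ∈ Ioo (-2) 2) :
    HasDerivAt (fun x => arcsin ((4 - s * x) / (2 * (s - x))) / (π * √(s ^ 2 - 4)))
      (1 / (π * √(4 - x ^ 2)) * (x - s)⁻¹) x := by
  obtain ⟨hx₁, hx₂⟩ := hx
  have hxs : x ≠ s := by linarith
  have hs4 : 0 < s ^ 2 - 4 := by nlinarith
  have hx4 : 0 < 4 - x ^ 2 := by nlinarith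
  set g := (4 - s * x) / (2 * (s - x))
  have hg : 1 - g ^ 2 = (s ^ 2 - 4) * (4 - x ^ 2) / (2 * (s - x)) ^ 2 :=
    one_sub_sq_mobius hxs
  have hg_lt : |g| < 1 := by
    rw [← sq_lt_one_iff_abs_lt_one]
    have : 0 < (s ^ 2 - 4) * (4 - x ^ 2) / (2 * (s - x)) ^ 2 := by positivity
    linarith
  have hroot : √(1 - g ^ 2) = √(s ^ 2 - 4) * √(4 - x ^ 2) / (2 * (s - x)) := by
    rw [hg, sqrt_div' _ (sq_nonneg _), sqrt_mul hs4.le, sqrt_sq (by linarith)]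
  obtain ⟨hg₁, hg₂⟩ := abs_lt.1 hg_lt
  refine (((hasDerivAt_arcsin hg₁.ne' hg₂.ne).comp x (hasDerivAt_mobius hxs)).div_const
    (π * √(s ^ 2 - 4))).congr_deriv ?_
  rw [hroot]
  field_simp
  rw [sq_sqrt hs4.le]
  ring

theorem integral_arcsine_density_mul_inv_sub {s : ℝ} (hs : 2 < s) :
    ∫ x in (-2 : ℝ)..2, 1 / (π * √(4 - x ^ 2)) * (x - s)⁻¹ = -(√(s ^ 2 - 4))⁻¹ := by
  have hcont : ContinuousOn (fun x => arcsin ((4 - s * x) / (2 * (s - x))) / (π * √(s ^ 2 - 4)))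
      (Icc (-2) 2) :=
    (continuous_arcsin.comp_continuousOn (ContinuousOn.div (by fun_prop) (by fun_prop)
      fun x hx => by linarith [hx.2])).div_const _
  have hnonpos : ∀ x ∈ Ioo (-2 : ℝ) 2, 1 / (π * √(4 - x ^ 2)) * (x - s)⁻¹ ≤ 0 := fun x hx =>
    mul_nonpos_of_nonneg_of_nonpos (by positivity) (inv_nonpos.2 (by linarith [hx.2]))
  rw [integral_eq_sub_of_hasDerivAt_of_nonpos (by norm_num) hcont
    (fun x hx => hasDerivAt_arcsin_mobius hs hx) hnonpos]
  have hg_right : (4 - s * 2) / (2 * (s - 2)) = -1 := by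
    rw [div_eq_iff (by linarith)]; ring
  have hg_left : (4 - s * -2) / (2 * (s - -2)) = 1 := by
    rw [div_eq_iff (by linarith)]; ring
  simp only [hg_right, hg_left, arcsin_neg_one, arcsin_one]
  field_simp
  ring

/-- **R-transform of the arcsine (inverse semicircle) law.** For every `w > 0`,
`∫_{−2}^{2} (1/(π√(4−x²))) · 1/(x − √(1+4w²)/w) dx = −w`; i.e. the Stieltjes transform of
the arcsine law satisfies `G(R(w) + 1/w) = −w` with `R(w) = (−1+√(1+4w²))/w`, twice the
R-transform of the symmetric binary measure — verifying that the additive free convolution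
of two symmetric binary measures is the arcsine law. -/
theorem arcsine_R_transform (w : ℝ) (hw : 0 < w) :
    (∫ x in (-2 : ℝ)..2,
        (1 / (Real.pi * Real.sqrt (4 - x ^ 2))) * (x - Real.sqrt (1 + 4 * w ^ 2) / w)⁻¹)
      = -w := by
  have hroot : √(1 + 4 * w ^ 2) ^ 2 = 1 + 4 * w ^ 2 := sq_sqrt (by positivity)
  have hs : 2 < √(1 + 4 * w ^ 2) / w := by
    rw [lt_div_iff₀ hw]
    nlinarith [sqrt_nonneg (1 + 4 * w ^ 2)]
  have hdisc : (√(1 + 4 * w ^ 2) / w) ^ 2 - 4 = w⁻¹ ^ 2 := by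
    field_simp
    linear_combination hroot
  rw [integral_arcsine_density_mul_inv_sub hs, hdisc, sqrt_sq (by positivity), inv_inv]
end

section
/- Let μ be a probability measure on ℝ that is absolutely continuous with respect to Lebesgue measure with density f, and let x₀ ∈ ℝ be a point at which f is continuous. Then lim_{y→0⁺} (1/π) · Im ∫ 1/( x − (x₀ + iy) ) dμ(x) = f(x₀) (the Stieltjes inversion formula). -/
open MeasureTheory Filter Topology Complex

/-!
`Im (x - (x₀ + iy))⁻¹ = y / ((x - x₀)² + y²)` is `π` times the Cauchy density with location `x₀`
and scale `y` (the Poisson kernel of the upper half-plane), so `(1/π) Im G_μ(x₀ + iy)` is the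
integral of that density against `μ`. As `y → 0⁺` the density concentrates at `x₀`: it gives the
ball of radius `δ` mass `(2/π) arctan (δ/y) → 1` and is at most `y / (π δ²)` outside it. On a small
ball, continuity of `f` squeezes `μ` between `f x₀ ∓ ε` times Lebesgue measure, which pins the
limit at `f x₀`. Comparing measures, rather than integrating against `f`, needs no measurability
of `f`.
-/

open Real ProbabilityTheory Metric Set
open scoped NNReal ENNReal

lemma cauchyPDFReal_nonneg (x₀ : ℝ) (γ : ℝ≥0) (x : ℝ) : 0 ≤ cauchyPDFReal x₀ γ x := by
  rw [cauchyPDFReal_def]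
  positivity

lemma cauchyPDFReal_le_inv_scale (x₀ : ℝ) (γ : ℝ≥0) (x : ℝ) :
    cauchyPDFReal x₀ γ x ≤ π⁻¹ * γ⁻¹ := by
  rw [cauchyPDFReal_def']
  exact mul_le_of_le_one_right (by positivity)
    (inv_le_one_of_one_le₀ (le_add_of_nonneg_right (sq_nonneg _)))

lemma cauchyPDFReal_le_of_le_dist {x₀ δ x : ℝ} (γ : ℝ≥0) (hδ : 0 < δ) (hx : δ ≤ dist x x₀) :
    cauchyPDFReal x₀ γ x ≤ π⁻¹ * γ / δ ^ 2 := by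
  rw [Real.dist_eq] at hx
  rw [cauchyPDFReal_def, div_eq_mul_inv]
  have : δ ^ 2 ≤ (x - x₀) ^ 2 + γ ^ 2 := by
    nlinarith [sq_abs (x - x₀), sq_nonneg (γ : ℝ)]
  gcongr

lemma hasDerivAt_inv_pi_mul_arctan_div (x₀ : ℝ) {γ : ℝ≥0} (hγ : γ ≠ 0) (x : ℝ) :
    HasDerivAt (fun x => π⁻¹ * Real.arctan ((x - x₀) / γ)) (cauchyPDFReal x₀ γ x) x := by
  have hγ' : (γ : ℝ) ≠ 0 := by exact_mod_cast hγ
  refine ((((hasDerivAt_id x).sub_const x₀).div_const (γ : ℝ)).arctan.const_mul π⁻¹).congr_deriv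
    ?_
  rw [cauchyPDFReal_def, id]
  field_simp
  ring

lemma integral_ball_cauchyPDFReal (x₀ : ℝ) {γ : ℝ≥0} (hγ : γ ≠ 0) {δ : ℝ} (hδ : 0 ≤ δ) :
    ∫ x in ball x₀ δ, cauchyPDFReal x₀ γ x = 2 * π⁻¹ * Real.arctan (δ / γ) := by
  rw [Real.ball_eq_Ioo, ← integral_Ioc_eq_integral_Ioo,
    ← intervalIntegral.integral_of_le (by linarith),
    intervalIntegral.integral_eq_sub_of_hasDerivAt
      (fun x _ => hasDerivAt_inv_pi_mul_arctan_div x₀ hγ x)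
      (integrable_cauchyPDFReal x₀).intervalIntegrable]
  simp only [add_sub_cancel_left, sub_sub_cancel_left, neg_div, arctan_neg]
  ring

lemma integral_ball_cauchyPDFReal_le_one (x₀ : ℝ) {γ : ℝ≥0} (hγ : γ ≠ 0) (δ : ℝ) :
    ∫ x in ball x₀ δ, cauchyPDFReal x₀ γ x ≤ 1 :=
  integral_cauchyPDFReal_eq_one x₀ hγ ▸ setIntegral_le_integral (integrable_cauchyPDFReal x₀)
    (.of_forall fun x => (cauchyPDF_pos x₀ hγ x).le)

lemma tendsto_integral_ball_cauchyPDFReal (x₀ : ℝ) {δ : ℝ} (hδ : 0 < δ) :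
    Tendsto (fun y : ℝ => ∫ x in ball x₀ δ, cauchyPDFReal x₀ y.toNNReal x) (𝓝[>] 0) (𝓝 1) := by
  have harg : Tendsto (fun y : ℝ => δ / y) (𝓝[>] 0) atTop := by
    simpa only [div_eq_mul_inv] using tendsto_inv_nhdsGT_zero.const_mul_atTop hδ
  have hlim : Tendsto (fun y : ℝ => 2 * π⁻¹ * Real.arctan (δ / y)) (𝓝[>] 0)
      (𝓝 (2 * π⁻¹ * (π / 2))) :=
    ((Real.tendsto_arctan_atTop.mono_right nhdsWithin_le_nhds).comp harg).const_mul _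
  rw [show 2 * π⁻¹ * (π / 2) = 1 by field_simp] at hlim
  refine hlim.congr' ?_
  filter_upwards [self_mem_nhdsWithin] with y (hy : 0 < y)
  rw [integral_ball_cauchyPDFReal x₀ (by simpa using hy) hδ.le, Real.coe_toNNReal _ hy.le]

lemma restrict_withDensity_le_smul {α : Type*} [MeasurableSpace α] (ν : Measure α)
    {F : α → ℝ≥0∞} {s : Set α} {c : ℝ≥0∞} (hs : MeasurableSet s) (h : ∀ x ∈ s, F x ≤ c) :
    (ν.withDensity F).restrict s ≤ c • ν.restrict s := by
  rw [restrict_withDensity hs, ← withDensity_const]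
  exact withDensity_mono ((ae_restrict_iff' hs).2 (.of_forall h))

lemma smul_restrict_le_restrict_withDensity {α : Type*} [MeasurableSpace α] (ν : Measure α)
    {F : α → ℝ≥0∞} {s : Set α} {c : ℝ≥0∞} (hs : MeasurableSet s) (h : ∀ x ∈ s, c ≤ F x) :
    c • ν.restrict s ≤ (ν.withDensity F).restrict s := by
  rw [restrict_withDensity hs, ← withDensity_const]
  exact withDensity_mono ((ae_restrict_iff' hs).2 (.of_forall h))

lemma integrable_cauchyPDFReal_of_isFiniteMeasure (μ : Measure ℝ) [IsFiniteMeasure μ] (x₀ : ℝ)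
    (γ : ℝ≥0) : Integrable (cauchyPDFReal x₀ γ) μ :=
  .of_bound (stronglyMeasurable_cauchyPDFReal x₀ γ).aestronglyMeasurable (π⁻¹ * γ⁻¹)
    (.of_forall fun x => by
      rw [Real.norm_of_nonneg (cauchyPDFReal_nonneg x₀ γ x)]
      exact cauchyPDFReal_le_inv_scale x₀ γ x)

section FiniteMeasure

variable {μ : Measure ℝ} [IsFiniteMeasure μ] {x₀ δ c : ℝ} {γ : ℝ≥0}

lemma mul_integral_ball_cauchyPDFReal_le
    (hμ : ENNReal.ofReal c • volume.restrict (ball x₀ δ) ≤ μ.restrict (ball x₀ δ)) :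
    c * ∫ x in ball x₀ δ, cauchyPDFReal x₀ γ x ≤ ∫ x, cauchyPDFReal x₀ γ x ∂μ := by
  have hint := integrable_cauchyPDFReal_of_isFiniteMeasure μ x₀ γ
  have hnonneg : 0 ≤ cauchyPDFReal x₀ γ := cauchyPDFReal_nonneg x₀ γ
  rcases lt_or_ge c 0 with hc | hc
  · exact (mul_nonpos_of_nonpos_of_nonneg hc.le (setIntegral_nonneg measurableSet_ball
      fun x _ => hnonneg x)).trans (integral_nonneg hnonneg)
  calc c * ∫ x in ball x₀ δ, cauchyPDFReal x₀ γ x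
      = ∫ x, cauchyPDFReal x₀ γ x ∂(ENNReal.ofReal c • volume.restrict (ball x₀ δ)) := by
        rw [integral_smul_measure, ENNReal.toReal_ofReal hc, smul_eq_mul]
    _ ≤ ∫ x in ball x₀ δ, cauchyPDFReal x₀ γ x ∂μ :=
        integral_mono_measure hμ (.of_forall hnonneg) hint.restrict
    _ ≤ ∫ x, cauchyPDFReal x₀ γ x ∂μ := setIntegral_le_integral hint (.of_forall hnonneg)

lemma integral_cauchyPDFReal_le (hγ : γ ≠ 0) (hc : 0 ≤ c) (hδ : 0 < δ)
    (hμ : μ.restrict (ball x₀ δ) ≤ ENNReal.ofReal c • volume.restrict (ball x₀ δ)) :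
    ∫ x, cauchyPDFReal x₀ γ x ∂μ ≤ c + μ.real univ * (π⁻¹ * γ / δ ^ 2) := by
  have hint := integrable_cauchyPDFReal_of_isFiniteMeasure μ x₀ γ
  have hnear : ∫ x in ball x₀ δ, cauchyPDFReal x₀ γ x ∂μ ≤ c :=
    calc ∫ x in ball x₀ δ, cauchyPDFReal x₀ γ x ∂μ
        ≤ ∫ x, cauchyPDFReal x₀ γ x ∂(ENNReal.ofReal c • volume.restrict (ball x₀ δ)) :=
          integral_mono_measure hμ (.of_forall (cauchyPDFReal_nonneg x₀ γ))
            ((integrable_cauchyPDFReal x₀).restrict.smul_measure ENNReal.ofReal_ne_top)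
      _ = c * ∫ x in ball x₀ δ, cauchyPDFReal x₀ γ x := by
          rw [integral_smul_measure, ENNReal.toReal_ofReal hc, smul_eq_mul]
      _ ≤ c := mul_le_of_le_one_right hc (integral_ball_cauchyPDFReal_le_one x₀ hγ δ)
  have hfar : ∫ x in (ball x₀ δ)ᶜ, cauchyPDFReal x₀ γ x ∂μ ≤ μ.real univ * (π⁻¹ * γ / δ ^ 2) :=
    calc ∫ x in (ball x₀ δ)ᶜ, cauchyPDFReal x₀ γ x ∂μ
        ≤ ∫ x in (ball x₀ δ)ᶜ, π⁻¹ * γ / δ ^ 2 ∂μ :=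
          setIntegral_mono_on hint.integrableOn (integrable_const _).integrableOn
            measurableSet_ball.compl fun x hx =>
              cauchyPDFReal_le_of_le_dist γ hδ (by simpa using hx)
      _ ≤ μ.real univ * (π⁻¹ * γ / δ ^ 2) := by
          rw [setIntegral_const, smul_eq_mul]
          exact mul_le_mul_of_nonneg_right (measureReal_mono (subset_univ _)) (by positivity)
  rw [← integral_add_compl measurableSet_ball hint]
  exact add_le_add hnear hfar

theorem tendsto_integral_cauchyPDFReal_nhdsGT_zero {a : ℝ} (ha : 0 ≤ a)
    (h : ∀ ε > 0, ∃ δ > 0,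
      ENNReal.ofReal (a - ε) • volume.restrict (ball x₀ δ) ≤ μ.restrict (ball x₀ δ) ∧
        μ.restrict (ball x₀ δ) ≤ ENNReal.ofReal (a + ε) • volume.restrict (ball x₀ δ)) :
    Tendsto (fun y : ℝ => ∫ x, cauchyPDFReal x₀ y.toNNReal x ∂μ) (𝓝[>] 0) (𝓝 a) := by
  rw [tendsto_order]
  refine ⟨fun b hb => ?_, fun b hb => ?_⟩
  · obtain ⟨δ, hδ, hlower, -⟩ := h ((a - b) / 2) (by linarith)
    have hlim : Tendsto (fun y : ℝ => (a - (a - b) / 2) *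
        ∫ x in ball x₀ δ, cauchyPDFReal x₀ y.toNNReal x) (𝓝[>] 0) (𝓝 (a - (a - b) / 2)) := by
      simpa using (tendsto_integral_ball_cauchyPDFReal x₀ hδ).const_mul (a - (a - b) / 2)
    filter_upwards [hlim.eventually_const_lt (show b < a - (a - b) / 2 by linarith)] with y hy
    exact hy.trans_le (mul_integral_ball_cauchyPDFReal_le hlower)
  · obtain ⟨δ, hδ, -, hupper⟩ := h ((b - a) / 2) (by linarith)
    have hlim : Tendsto (fun y : ℝ => a + (b - a) / 2 + μ.real univ * (π⁻¹ * y / δ ^ 2))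
        (𝓝[>] 0) (𝓝 (a + (b - a) / 2)) := by
      have hcont : Continuous fun y : ℝ => a + (b - a) / 2 + μ.real univ * (π⁻¹ * y / δ ^ 2) :=
        by fun_prop
      simpa using hcont.continuousWithinAt.tendsto (x := 0) (s := Ioi 0)
    filter_upwards [hlim.eventually_lt_const (show a + (b - a) / 2 < b by linarith),
      self_mem_nhdsWithin] with y hy (hy₀ : 0 < y)
    refine (integral_cauchyPDFReal_le (by simpa using hy₀) (by linarith) hδ hupper).trans_lt ?_
    rwa [Real.coe_toNNReal _ hy₀.le]

end FiniteMeasure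

lemma integrable_inv_ofReal_sub (μ : Measure ℝ) [IsFiniteMeasure μ] {z : ℂ} (hz : z.im ≠ 0) :
    Integrable (fun x : ℝ => ((x : ℂ) - z)⁻¹) μ := by
  refine .of_bound (by fun_prop) |z.im|⁻¹ (.of_forall fun x => ?_)
  rw [norm_inv]
  refine inv_anti₀ (abs_pos.2 hz) ?_
  simpa using abs_im_le_norm ((x : ℂ) - z)

lemma im_inv_ofReal_sub_add_mul_I (x x₀ : ℝ) {y : ℝ} (hy : 0 ≤ y) :
    (((x : ℂ) - (x₀ + y * I))⁻¹).im = π * cauchyPDFReal x₀ y.toNNReal x := by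
  rw [cauchyPDFReal_def, Real.coe_toNNReal _ hy, inv_im, normSq_apply]
  simp only [sub_im, ofReal_im, add_im, mul_im, ofReal_re, I_im, mul_one, I_re, mul_zero,
    add_zero, zero_add, zero_sub, neg_neg, sub_re, add_re, mul_re, sub_self, mul_neg, neg_mul]
  field_simp

lemma one_div_pi_mul_im_integral_inv_sub (μ : Measure ℝ) [IsFiniteMeasure μ] (x₀ : ℝ) {y : ℝ}
    (hy : 0 < y) :
    1 / π * (∫ x, ((x : ℂ) - (x₀ + y * I))⁻¹ ∂μ).im = ∫ x, cauchyPDFReal x₀ y.toNNReal x ∂μ := by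
  have hint := integrable_inv_ofReal_sub μ (z := x₀ + y * I) (by simpa using hy.ne')
  rw [← RCLike.im_eq_complex_im, ← integral_im hint]
  simp only [RCLike.im_eq_complex_im, im_inv_ofReal_sub_add_mul_I _ x₀ hy.le, integral_const_mul]
  field_simp

/-- **Stieltjes inversion formula.** If `μ` is a probability measure on `ℝ` absolutely
continuous with respect to Lebesgue measure with density `f`, and `f` is continuous at `x₀`,
then `lim_{y→0⁺} (1/π)·Im ∫ 1/(x − (x₀ + iy)) dμ(x) = f(x₀)`. -/
theorem stieltjes_inversion
    (f : ℝ → ℝ) (hf : ∀ x, 0 ≤ f x)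
    (μ : Measure ℝ) [IsProbabilityMeasure μ]
    (hμ : μ = volume.withDensity fun x => ENNReal.ofReal (f x))
    (x₀ : ℝ) (hcont : ContinuousAt f x₀) :
    Tendsto
      (fun y : ℝ =>
        (1 / Real.pi) * (∫ x, ((x : ℂ) - ((x₀ : ℂ) + (y : ℂ) * Complex.I))⁻¹ ∂μ).im)
      (𝓝[>] 0) (𝓝 (f x₀)) := by
  have hsandwich : ∀ ε > 0, ∃ δ > 0,
      ENNReal.ofReal (f x₀ - ε) • volume.restrict (ball x₀ δ) ≤ μ.restrict (ball x₀ δ) ∧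
        μ.restrict (ball x₀ δ) ≤ ENNReal.ofReal (f x₀ + ε) • volume.restrict (ball x₀ δ) := by
    intro ε hε
    obtain ⟨δ, hδ, hclose⟩ := Metric.continuousAt_iff.1 hcont ε hε
    have hbounds : ∀ x ∈ ball x₀ δ, f x₀ - ε ≤ f x ∧ f x ≤ f x₀ + ε := fun x hx => by
      have := abs_sub_lt_iff.1 (hclose hx)
      constructor <;> linarith
    subst hμ
    exact ⟨δ, hδ,
      smul_restrict_le_restrict_withDensity _ measurableSet_ball fun x hx =>
        ENNReal.ofReal_le_ofReal (hbounds x hx).1,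
      restrict_withDensity_le_smul _ measurableSet_ball fun x hx =>
        ENNReal.ofReal_le_ofReal (hbounds x hx).2⟩
  refine (tendsto_integral_cauchyPDFReal_nhdsGT_zero (hf x₀) hsandwich).congr' ?_
  filter_upwards [self_mem_nhdsWithin] with y hy
  exact (one_div_pi_mul_im_integral_inv_sub μ x₀ hy).symm
end

section
/- Let m ≥ k ≥ 1 be integers and let m_1,…,m_k be positive integers with m_1 + ⋯ + m_k = m. Then the number of ordered k-tuples (V_1,…,V_k) of pairwise disjoint nonempty subsets of {1,…,m} with ⋃_{i=1}^k V_i = {1,…,m} and |V_i| = m_i for each i, such that the partition {V_1,…,V_k} is non-crossing, equals m!/(m−k+1)!. In particular this count does not depend on the cardinalities m_1,…,m_k. -/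
/-- An (ordered or unordered) family of blocks is non-crossing if there are no indices
`i₁ < i₂ < i₃ < i₄` with `i₁, i₃` in one block and `i₂, i₄` in a different block. -/
def IsNonCrossingFamily {m k : ℕ} (V : Fin k → Finset (Fin m)) : Prop :=
  ¬ ∃ (a b : Fin k) (i₁ i₂ i₃ i₄ : Fin m),
      a ≠ b ∧ i₁ < i₂ ∧ i₂ < i₃ ∧ i₃ < i₄ ∧
      i₁ ∈ V a ∧ i₃ ∈ V a ∧ i₂ ∈ V b ∧ i₄ ∈ V b

/-!
Record a labelled partition of `{0, …, m - 1}` by its block minima `p i` and consider the excess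
`∑_{p i < t} m_i - t`, the number of elements that blocks opened before `t` still place at or
after `t`. For a non-crossing partition, a non-minimum `x` belongs to the block opened at the
last position before `x` where the excess is smaller than at `x`; hence non-crossing partitions
with block sizes `m_i` correspond to injective `p` whose excess is positive at every non-minimum.
Placing `k` labelled points injectively on `ℤ/(m + 1)`, the cycle lemma singles out exactly one
of the `m + 1` rotations whose excess stays nonnegative, and the points then avoid the position
`m`; so `m + 1` times the count is `(m + 1) m ⋯ (m - k + 2)`.
-/

namespace NonCrossing

open Finset

variable {k : ℕ}

/-- When `q` lists the block minima of a partition with block sizes `w`, the blocks opened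
before `t` have `excess w q t` elements at positions `≥ t`. -/
def excess (w q : Fin k → ℕ) (t : ℕ) : ℤ :=
  ∑ i with q i < t, (w i : ℤ) - t

section Excess

variable (w q : Fin k → ℕ)

@[simp]
lemma excess_zero : excess w q 0 = 0 := by
  simp [excess]

lemma excess_succ (t : ℕ) :
    excess w q (t + 1) = excess w q t + ∑ i with q i = t, (w i : ℤ) - 1 := by
  simp only [excess, sum_filter]
  have hsplit : ∀ i, (if q i < t + 1 then (w i : ℤ) else 0)
      = (if q i < t then (w i : ℤ) else 0) + (if q i = t then (w i : ℤ) else 0) := by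
    intro i
    split_ifs <;> omega
  rw [sum_congr rfl fun i _ => hsplit i, sum_add_distrib]
  push_cast
  ring

variable {w q}

lemma excess_succ_of_forall_ne {t : ℕ} (ht : ∀ i, q i ≠ t) :
    excess w q (t + 1) = excess w q t - 1 := by
  rw [excess_succ, filter_false_of_mem fun i _ => ht i, sum_empty]
  ring

lemma excess_succ_of_eq (hq : Function.Injective q) {i : Fin k} {t : ℕ} (hi : q i = t) :
    excess w q (t + 1) = excess w q t + w i - 1 := by
  have hfilter : ({j | q j = t} : Finset (Fin k)) = {i} := by
    ext j
    simpa [← hi] using hq.eq_iff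
  rw [excess_succ, hfilter, sum_singleton]

lemma excess_of_forall_lt {t : ℕ} (ht : ∀ i, q i < t) :
    excess w q t = ∑ i, (w i : ℤ) - t := by
  simp [excess, ht]

end Excess

/-- The admissible positions `q` of the minima of blocks of sizes `w` partitioning
`{0, …, m - 1}`. -/
def IsAdmissible (w : Fin k → ℕ) (m : ℕ) (q : Fin k → ℕ) : Prop :=
  ∀ x < m, (∀ i, q i ≠ x) → 0 < excess w q x

lemma IsAdmissible.excess_zero_lt {w q : Fin k → ℕ} {m : ℕ} (hq : IsAdmissible w m q) :
    ∀ y < m, (∀ i, q i ≠ y) → excess w q 0 < excess w q y :=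
  fun y hy hmin => by simpa using hq y hy hmin

lemma IsAdmissible.excess_nonneg {w q : Fin k → ℕ} {m : ℕ} (hw : ∀ i, 0 < w i)
    (hq : IsAdmissible w m q) : ∀ t ≤ m, 0 ≤ excess w q t := by
  intro t
  induction t with
  | zero => simp
  | succ t ih =>
    intro ht
    by_cases hmin : ∃ i, q i = t
    · obtain ⟨i, hi⟩ := hmin
      have hwi : (w i : ℤ) ≤ ∑ j with q j = t, (w j : ℤ) :=
        single_le_sum (f := fun j => (w j : ℤ)) (fun j _ => by positivity)
          (mem_filter.2 ⟨mem_univ i, hi⟩)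
      have := hw i
      rw [excess_succ]
      linarith [ih (by omega)]
    · simp only [not_exists] at hmin
      have := hq t (by omega) hmin
      rw [excess_succ_of_forall_ne hmin]
      omega

lemma excess_nonneg_iff {w q : Fin k → ℕ} {m : ℕ} (hw : ∀ i, 0 < w i) (hsum : ∑ i, w i = m)
    (hq : ∀ i, q i ≤ m) :
    (∀ t ≤ m, 0 ≤ excess w q t) ↔ (∀ i, q i < m) ∧ IsAdmissible w m q := by
  refine ⟨fun h => ⟨fun i => ?_, fun x hx hmin => ?_⟩, fun h => h.2.excess_nonneg hw⟩
  · by_contra hi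
    have hqi : q i = m := by have := hq i; omega
    have hsub : ∑ j with q j < m, (w j : ℤ) ≤ ∑ j ∈ univ.erase i, (w j : ℤ) :=
      sum_le_sum_of_subset_of_nonneg
        (fun j hj => mem_erase.2 ⟨fun hji => by simp [hji, hqi] at hj, mem_univ j⟩)
        fun j _ _ => by positivity
    rw [sum_erase_eq_sub (mem_univ i)] at hsub
    have hsumz : ∑ j, (w j : ℤ) = m := by exact_mod_cast hsum
    have hm := h m le_rfl
    simp only [excess] at hm
    have := hw i
    omega
  · have := h (x + 1) hx
    rw [excess_succ_of_forall_ne hmin] at this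
    omega

noncomputable def opener (h : ℕ → ℤ) (x : ℕ) : ℕ :=
  sSup {y | y < x ∧ h y < h x}

section Opener

variable {h : ℕ → ℤ} {x y j : ℕ}

lemma le_opener (hy : y < x) (hyx : h y < h x) : y ≤ opener h x :=
  le_csSup (⟨x, fun _ hz => hz.1.le⟩ : BddAbove {y | y < x ∧ h y < h x}) ⟨hy, hyx⟩

lemma le_apply_of_opener_lt (hj : opener h x < j) (hjx : j < x) : h x ≤ h j := by
  by_contra! hlt
  exact (le_opener hjx hlt).not_gt hj

lemma opener_lt_and_apply_opener_lt (hy : y < x) (hyx : h y < h x) :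
    opener h x < x ∧ h (opener h x) < h x :=
  Nat.sSup_mem (s := {y | y < x ∧ h y < h x}) ⟨y, hy, hyx⟩ ⟨x, fun _ hz => hz.1.le⟩

lemma opener_eq (hy : y < x) (hyx : h y < h x) (hmid : ∀ j, y < j → j < x → h x ≤ h j) :
    opener h x = y := by
  obtain ⟨hox, hlt⟩ := opener_lt_and_apply_opener_lt hy hyx
  rcases (le_opener hy hyx).lt_or_eq with hyo | hyo
  · exact absurd (hmid _ hyo hox) (not_le.2 hlt)
  · exact hyo.symm

variable (hx : h 0 < h x)
include hx

lemma opener_lt : opener h x < x :=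
  (opener_lt_and_apply_opener_lt (Nat.pos_of_ne_zero (by rintro rfl; exact hx.false)) hx).1

lemma apply_opener_lt : h (opener h x) < h x :=
  (opener_lt_and_apply_opener_lt (Nat.pos_of_ne_zero (by rintro rfl; exact hx.false)) hx).2

lemma apply_opener_lt_apply_succ : h (opener h x) < h (opener h x + 1) := by
  have hox := opener_lt hx
  rcases (show opener h x + 1 ≤ x from hox).lt_or_eq with hlt | heq
  · exact (apply_opener_lt hx).trans_le (le_apply_of_opener_lt (Nat.lt_succ_self _) hlt)
  · rw [heq]
    exact apply_opener_lt hx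

lemma not_opener_lt_opener_of_lt (hoy : opener h y < opener h x) (hoxy : opener h x < y)
    (hyx : y < x) : False := by
  have h1 := le_apply_of_opener_lt hoy hoxy
  have h2 := apply_opener_lt hx
  have h3 := le_apply_of_opener_lt hoxy hyx
  omega

end Opener

lemma apply_lt_of_opener_lt {h : ℕ → ℤ} {x x' : ℕ} (hox : opener h x' < x) (hxx' : x < x')
    (hdec : h (x + 1) < h x) : h x' < h x := by
  rcases (show x + 1 ≤ x' from hxx').lt_or_eq with hlt | heq
  · exact (le_apply_of_opener_lt (hox.trans (Nat.lt_succ_self x)) hlt).trans_lt hdec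
  · rw [← heq]
    exact hdec

section Blocks

variable {m : ℕ} (h : ℕ → ℤ) (p : Fin k → Fin m)

noncomputable def blocksOf (i : Fin k) : Finset (Fin m) :=
  {x | (x : ℕ) = p i ∨ (∀ j, (p j : ℕ) ≠ x) ∧ opener h x = p i}

variable {h p}

lemma mem_blocksOf {i : Fin k} {x : Fin m} :
    x ∈ blocksOf h p i ↔ (x : ℕ) = p i ∨ (∀ j, (p j : ℕ) ≠ x) ∧ opener h x = p i := by
  simp [blocksOf]

lemma self_mem_blocksOf (i : Fin k) : p i ∈ blocksOf h p i :=
  mem_blocksOf.2 (Or.inl rfl)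

lemma disjoint_blocksOf (hp : Function.Injective p) {i j : Fin k} (hij : i ≠ j) :
    Disjoint (blocksOf h p i) (blocksOf h p j) := by
  refine disjoint_left.2 fun x hxi hxj => hij (hp (Fin.val_injective ?_))
  rcases mem_blocksOf.1 hxi with hi | ⟨hxmin, hi⟩ <;>
    rcases mem_blocksOf.1 hxj with hj | ⟨hxmin', hj⟩
  · omega
  · exact absurd hi.symm (hxmin' i)
  · exact absurd hj.symm (hxmin j)
  · omega

variable (hup : ∀ y < m, (∀ j, (p j : ℕ) ≠ y) → h 0 < h y)
include hup

lemma opener_lt_of_mem_blocksOf {i : Fin k} {x : Fin m} (hx : x ∈ blocksOf h p i)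
    (hxi : (x : ℕ) ≠ p i) : (∀ j, (p j : ℕ) ≠ x) ∧ opener h x = p i ∧ (p i : ℕ) < x := by
  rcases mem_blocksOf.1 hx with h' | ⟨hxmin, hi⟩
  · exact absurd h' hxi
  · exact ⟨hxmin, hi, hi ▸ opener_lt (hup x x.isLt hxmin)⟩

lemma le_of_mem_blocksOf {i : Fin k} {x : Fin m} (hx : x ∈ blocksOf h p i) : p i ≤ x := by
  by_cases hxi : (x : ℕ) = p i
  · exact (Fin.val_injective hxi).ge
  · exact (opener_lt_of_mem_blocksOf hup hx hxi).2.2.le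

lemma isLeast_blocksOf (i : Fin k) : IsLeast (blocksOf h p i : Set (Fin m)) (p i) :=
  ⟨self_mem_blocksOf i, fun _ hx => le_of_mem_blocksOf hup hx⟩

lemma isNonCrossingFamily_blocksOf (hp : Function.Injective p) :
    IsNonCrossingFamily (blocksOf h p) := by
  rintro ⟨a, b, i₁, i₂, i₃, i₄, hab, h₁₂, h₂₃, h₃₄, hi₁, hi₃, hi₂, hi₄⟩
  have ha₁ := le_of_mem_blocksOf hup hi₁
  have hb₂ := le_of_mem_blocksOf hup hi₂
  simp only [Fin.lt_def, Fin.le_def] at *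
  obtain ⟨-, ho₃, -⟩ := opener_lt_of_mem_blocksOf hup hi₃ (by omega)
  have hpab : (p a : ℕ) ≠ p b := fun e => hab (hp (Fin.val_injective e))
  rcases Nat.lt_or_gt_of_ne hpab with hlt | hlt
  · obtain ⟨hmin₄, ho₄, -⟩ := opener_lt_of_mem_blocksOf hup hi₄ (by omega)
    exact not_opener_lt_opener_of_lt (hup _ i₄.isLt hmin₄) (ho₃.trans_lt (ho₄ ▸ hlt))
      (by omega) h₃₄
  · obtain ⟨-, ho₂, -⟩ := opener_lt_of_mem_blocksOf hup hi₂ (by omega)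
    obtain ⟨hmin₃, -, -⟩ := opener_lt_of_mem_blocksOf hup hi₃ (by omega)
    exact not_opener_lt_opener_of_lt (hup _ i₃.isLt hmin₃) (ho₂.trans_lt (ho₃ ▸ hlt))
      (by omega) h₂₃

variable (hdown : ∀ y < m, (∀ j, (p j : ℕ) ≠ y) → h (y + 1) < h y)
include hdown

lemma exists_mem_blocksOf (x : Fin m) : ∃ i, x ∈ blocksOf h p i := by
  by_cases hx : ∃ i, (p i : ℕ) = x
  · obtain ⟨i, hi⟩ := hx
    exact ⟨i, mem_blocksOf.2 (Or.inl hi.symm)⟩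
  · simp only [not_exists] at hx
    have hxpos := hup x x.isLt hx
    by_contra! hnone
    have hox := opener_lt hxpos
    have hopen : ∀ j, (p j : ℕ) ≠ opener h x := fun j hj =>
      hnone j (mem_blocksOf.2 (Or.inr ⟨hx, hj.symm⟩))
    exact (hdown _ (by omega) hopen).not_gt (apply_opener_lt_apply_succ hxpos)

/-- The non-minima of block `i` have pairwise distinct values of `h`, all in
`(h (p i), h (p i + 1)]`. -/
lemma card_blocksOf_le (i : Fin k) :
    #(blocksOf h p i) ≤ (h (p i + 1) - h (p i)).toNat + 1 := by
  set S : Finset (Fin m) := {x | (∀ j, (p j : ℕ) ≠ x) ∧ opener h x = p i}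
  have hsub : blocksOf h p i ⊆ insert (p i) S := fun x hx => by
    rcases mem_blocksOf.1 hx with hx | hx
    · exact mem_insert.2 (Or.inl (Fin.val_injective hx))
    · exact mem_insert_of_mem (by simpa [S] using hx)
  have hmemS : ∀ x ∈ S, (∀ j, (p j : ℕ) ≠ x) ∧ opener h x = p i ∧ h 0 < h x := fun x hx => by
    simp only [S, mem_filter, mem_univ, true_and] at hx
    exact ⟨hx.1, hx.2, hup x x.isLt hx.1⟩
  have hanti : ∀ x ∈ S, ∀ x' ∈ S, (x : ℕ) < x' → h x' < h x := fun x hx x' hx' hlt => by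
    obtain ⟨hxmin, hox, hxpos⟩ := hmemS x hx
    obtain ⟨-, hox', -⟩ := hmemS x' hx'
    have := opener_lt hxpos
    exact apply_lt_of_opener_lt (by omega) hlt (hdown x x.isLt hxmin)
  have hS : #S ≤ #(Ioc (h (p i)) (h (p i + 1))) := by
    refine card_le_card_of_injOn (fun x => h x) (fun x hx => ?_) fun x hx x' hx' hxx' => ?_
    · obtain ⟨-, ho, hxpos⟩ := hmemS x hx
      have hox := opener_lt hxpos
      rw [ho] at hox
      refine mem_Ioc.2 ⟨ho ▸ apply_opener_lt hxpos, ?_⟩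
      rcases (show (p i : ℕ) + 1 ≤ x from hox).lt_or_eq with hlt | heq
      · exact le_apply_of_opener_lt (ho ▸ Nat.lt_succ_self _) hlt
      · exact (congrArg h heq).ge
    · by_contra hne
      rcases Nat.lt_or_gt_of_ne (Fin.val_ne_of_ne hne) with hlt | hlt
      · exact (hanti x hx x' hx' hlt).ne' hxx'
      · exact (hanti x' hx' x hx hlt).ne hxx'
  calc #(blocksOf h p i) ≤ #S + 1 := (card_le_card hsub).trans (card_insert_le _ _)
    _ ≤ (h (p i + 1) - h (p i)).toNat + 1 := by rw [Int.card_Ioc] at hS; omega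

end Blocks

structure IsLabelledNCPartition {m : ℕ} (w : Fin k → ℕ) (V : Fin k → Finset (Fin m)) : Prop where
  nonempty : ∀ i, (V i).Nonempty
  disjoint : ∀ i j, i ≠ j → Disjoint (V i) (V j)
  cover : ∀ x, ∃ i, x ∈ V i
  card_eq : ∀ i, #(V i) = w i
  nonCrossing : IsNonCrossingFamily V

lemma isLabelledNCPartition_iff {m : ℕ} {w : Fin k → ℕ} {V : Fin k → Finset (Fin m)} :
    IsLabelledNCPartition w V ↔ (∀ i, (V i).Nonempty) ∧ (∀ i j, i ≠ j → Disjoint (V i) (V j)) ∧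
      (∀ x, ∃ i, x ∈ V i) ∧ (∀ i, #(V i) = w i) ∧ IsNonCrossingFamily V :=
  ⟨fun h => ⟨h.1, h.2, h.3, h.4, h.5⟩, fun ⟨h₁, h₂, h₃, h₄, h₅⟩ => ⟨h₁, h₂, h₃, h₄, h₅⟩⟩

lemma sum_card_eq_of_disjoint_of_cover {m : ℕ} {V : Fin k → Finset (Fin m)}
    (hdisj : ∀ i j, i ≠ j → Disjoint (V i) (V j)) (hcov : ∀ x, ∃ i, x ∈ V i) :
    ∑ i, #(V i) = m := by
  classical
  have huniv : univ.biUnion V = univ :=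
    eq_univ_of_forall fun x => mem_biUnion.2 ((hcov x).imp fun i hi => ⟨mem_univ i, hi⟩)
  rw [← card_biUnion fun i _ j _ hij => hdisj i j hij, huniv, card_univ, Fintype.card_fin]

lemma isLabelledNCPartition_blocksOf {m : ℕ} {w : Fin k → ℕ} (hw : ∀ i, 0 < w i)
    (hsum : ∑ i, w i = m) {p : Fin k → Fin m} (hp : Function.Injective p)
    (hadm : IsAdmissible w m fun i => p i) :
    IsLabelledNCPartition w (blocksOf (excess w fun i => p i) p) := by
  set h : ℕ → ℤ := excess w fun i => p i with hh
  have hup : ∀ y < m, (∀ j, (p j : ℕ) ≠ y) → h 0 < h y := hadm.excess_zero_lt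
  have hdown : ∀ y < m, (∀ j, (p j : ℕ) ≠ y) → h (y + 1) < h y :=
    fun y _ hmin => by rw [hh, excess_succ_of_forall_ne hmin]; omega
  have hdisj : ∀ i j, i ≠ j → Disjoint (blocksOf h p i) (blocksOf h p j) :=
    fun i j => disjoint_blocksOf hp
  have hcov := exists_mem_blocksOf hup hdown
  have hle : ∀ i ∈ univ, #(blocksOf h p i) ≤ w i := fun i _ => by
    have hstep : h (p i + 1) = h (p i) + w i - 1 :=
      excess_succ_of_eq (fun a b e => hp (Fin.val_injective e)) rfl
    have := card_blocksOf_le hup hdown i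
    rw [hstep] at this
    have := hw i
    omega
  refine ⟨fun i => ⟨p i, self_mem_blocksOf i⟩, hdisj, hcov, fun i => ?_,
    isNonCrossingFamily_blocksOf hup hp⟩
  -- the upper bounds `hle` are sharp because both sides sum to `m`
  refine (sum_eq_sum_iff_of_le hle).1 ?_ i (mem_univ i)
  rw [sum_card_eq_of_disjoint_of_cover hdisj hcov, hsum]

section Minima

variable {m : ℕ} {w : Fin k → ℕ} {V : Fin k → Finset (Fin m)} {p : Fin k → Fin m}

lemma eq_of_mem_of_mem (hdisj : ∀ i j, i ≠ j → Disjoint (V i) (V j)) {a b : Fin k} {y : Fin m}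
    (ha : y ∈ V a) (hb : y ∈ V b) : a = b :=
  by_contra fun hab => disjoint_left.1 (hdisj a b hab) ha hb

lemma injective_of_isLeast (hdisj : ∀ i j, i ≠ j → Disjoint (V i) (V j))
    (hp : ∀ i, IsLeast (V i : Set (Fin m)) (p i)) : Function.Injective p :=
  fun a b hab => eq_of_mem_of_mem hdisj (hp a).1 (hab ▸ (hp b).1)

variable (V p) in
def pending (j : ℕ) : Finset (Fin m) :=
  ({i | (p i : ℕ) < j} : Finset (Fin k)).biUnion V |>.filter fun y => j ≤ y

lemma mem_pending {j : ℕ} {y : Fin m} :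
    y ∈ pending V p j ↔ j ≤ y ∧ ∃ i, (p i : ℕ) < j ∧ y ∈ V i := by
  simp only [pending, mem_filter, mem_biUnion, mem_univ, true_and]
  tauto

variable (hcov : ∀ x, ∃ i, x ∈ V i) (hp : ∀ i, IsLeast (V i : Set (Fin m)) (p i))
  (hdisj : ∀ i j, i ≠ j → Disjoint (V i) (V j)) (hnc : IsNonCrossingFamily V)

include hcov hp in
lemma mem_pending_self {x : Fin m} (hx : ∀ j, (p j : ℕ) ≠ x) : x ∈ pending V p x := by
  obtain ⟨b, hb⟩ := hcov x
  exact mem_pending.2 ⟨le_rfl, b, lt_of_le_of_ne ((hp b).2 hb) (hx b), hb⟩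

include hcov hp hdisj in
/-- Every position before `j` lies in a block opened before `j`; the other elements of those
blocks are pending. -/
lemma excess_eq_card_pending (hsize : ∀ i, #(V i) = w i) {j : ℕ} (hj : j ≤ m) :
    excess w (fun i => p i) j = #(pending V p j) := by
  classical
  set B := ({i | (p i : ℕ) < j} : Finset (Fin k)).biUnion V
  have hB : ∑ i with (p i : ℕ) < j, w i = #B := by
    rw [card_biUnion fun a _ b _ hab => hdisj a b hab]
    exact sum_congr rfl fun i _ => (hsize i).symm
  have hbefore :
      B.filter (fun y : Fin m => ¬ j ≤ y) = ({y | (y : ℕ) < j} : Finset (Fin m)) := by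
    ext y
    simp only [B, mem_filter, mem_biUnion, mem_univ, true_and, not_le, and_iff_right_iff_imp]
    intro hy
    obtain ⟨b, hb⟩ := hcov y
    exact ⟨b, lt_of_le_of_lt ((hp b).2 hb) hy, hb⟩
  have hsplit := card_filter_add_card_filter_not (s := B) fun y : Fin m => j ≤ y
  rw [hbefore, Fin.card_filter_val_lt, min_eq_right hj] at hsplit
  simp only [excess, pending]
  rw [← Nat.cast_sum, hB, ← hsplit]
  push_cast
  ring

include hcov hp hdisj in
lemma isAdmissible_of_isLeast (hsize : ∀ i, #(V i) = w i) : IsAdmissible w m fun i => p i :=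
  fun x hx hmin => by
    rw [excess_eq_card_pending hcov hp hdisj hsize hx.le]
    exact_mod_cast card_pos.2 ⟨_, mem_pending_self hcov hp (x := ⟨x, hx⟩) hmin⟩

include hcov hp hdisj hnc in
lemma card_pending_lt_card_pending {i : Fin k} {x : Fin m} (hx : x ∈ V i)
    (hxmin : ∀ j, (p j : ℕ) ≠ x) : #(pending V p (p i)) < #(pending V p x) := by
  have hpx : (p i : ℕ) < x := lt_of_le_of_ne ((hp i).2 hx) (hxmin i)
  have hxnot : x ∉ pending V p (p i) := fun hx' => by
    obtain ⟨-, b, hb, hxb⟩ := mem_pending.1 hx'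
    exact hb.ne (congrArg _ (congrArg p (eq_of_mem_of_mem hdisj hxb hx)))
  have hsub : insert x (pending V p (p i)) ⊆ pending V p x := by
    refine insert_subset (mem_pending_self hcov hp hxmin) fun y hy => ?_
    obtain ⟨hiy, b, hb, hyb⟩ := mem_pending.1 hy
    have hbi : b ≠ i := by rintro rfl; omega
    have hiy' : (p i : ℕ) < y := lt_of_le_of_ne hiy fun e =>
      hbi (eq_of_mem_of_mem hdisj hyb (Fin.val_injective e ▸ (hp i).1))
    refine mem_pending.2 ⟨?_, b, by omega, hyb⟩
    by_contra! hyx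
    exact hnc ⟨b, i, p b, p i, y, x, hbi, hb, hiy', hyx, (hp b).1, hyb, (hp i).1, hx⟩
  simpa [card_insert_of_notMem hxnot] using card_le_card hsub

include hp hdisj hnc in
lemma pending_subset_pending {i : Fin k} {x : Fin m} (hx : x ∈ V i) {j : ℕ}
    (hij : (p i : ℕ) < j) (hjx : j < x) : pending V p x ⊆ pending V p j := by
  intro y hy
  obtain ⟨hxy, b, hbx, hyb⟩ := mem_pending.1 hy
  refine mem_pending.2 ⟨by omega, b, ?_, hyb⟩
  by_contra! hjb
  have hib : i ≠ b := by rintro rfl; omega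
  have hxy' : (x : ℕ) < y := lt_of_le_of_ne hxy fun e =>
    hib (eq_of_mem_of_mem hdisj hx (Fin.val_injective e ▸ hyb))
  exact hnc ⟨i, b, p i, p b, x, y, hib, show (p i : ℕ) < p b by omega, hbx, hxy', (hp i).1, hx,
    (hp b).1, hyb⟩

include hcov hp hdisj hnc in
lemma opener_excess_eq (hsize : ∀ i, #(V i) = w i) {i : Fin k} {x : Fin m} (hx : x ∈ V i)
    (hxmin : ∀ j, (p j : ℕ) ≠ x) : opener (excess w fun i => p i) x = p i := by
  have hcard : ∀ j ≤ m, excess w (fun i => p i) j = #(pending V p j) :=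
    fun j => excess_eq_card_pending hcov hp hdisj hsize
  refine opener_eq (lt_of_le_of_ne ((hp i).2 hx) (hxmin i)) ?_ fun j hij hjx => ?_
  · rw [hcard _ (p i).isLt.le, hcard _ x.isLt.le]
    exact_mod_cast card_pending_lt_card_pending hcov hp hdisj hnc hx hxmin
  · rw [hcard _ x.isLt.le, hcard j (by omega)]
    exact_mod_cast card_le_card (pending_subset_pending hp hdisj hnc hx hij hjx)

include hcov hp hdisj hnc in
lemma blocksOf_excess_eq (hsize : ∀ i, #(V i) = w i) (i : Fin k) :
    blocksOf (excess w fun i => p i) p i = V i := by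
  ext x
  rw [mem_blocksOf]
  constructor
  · rintro (hxi | ⟨hxmin, hox⟩)
    · exact Fin.val_injective hxi ▸ (hp i).1
    · obtain ⟨b, hb⟩ := hcov x
      rw [opener_excess_eq hcov hp hdisj hnc hsize hb hxmin] at hox
      rwa [injective_of_isLeast hdisj hp (Fin.val_injective hox)] at hb
  · intro hx
    by_cases hxmin : ∀ j, (p j : ℕ) ≠ x
    · exact Or.inr ⟨hxmin, opener_excess_eq hcov hp hdisj hnc hsize hx hxmin⟩
    · simp only [not_forall, not_not] at hxmin
      obtain ⟨j, hj⟩ := hxmin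
      have hji := eq_of_mem_of_mem hdisj (Fin.val_injective hj ▸ (hp j).1) hx
      exact Or.inl (hji ▸ hj.symm)

end Minima

noncomputable def labelledNCPartitionEquiv {m : ℕ} {w : Fin k → ℕ} (hw : ∀ i, 0 < w i)
    (hsum : ∑ i, w i = m) :
    {V : Fin k → Finset (Fin m) // IsLabelledNCPartition w V} ≃
      {p : Fin k → Fin m // Function.Injective p ∧ IsAdmissible w m fun i => p i} where
  toFun V :=
    have hp := fun i => isLeast_min' (V.1 i) (V.2.nonempty i)
    ⟨fun i => (V.1 i).min' (V.2.nonempty i), injective_of_isLeast V.2.disjoint hp,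
      isAdmissible_of_isLeast V.2.cover hp V.2.disjoint V.2.card_eq⟩
  invFun p := ⟨_, isLabelledNCPartition_blocksOf hw hsum p.2.1 p.2.2⟩
  left_inv V := Subtype.ext <| funext <| blocksOf_excess_eq V.2.cover
    (fun i => isLeast_min' _ (V.2.nonempty i)) V.2.disjoint V.2.nonCrossing V.2.card_eq
  right_inv p := Subtype.ext <| funext fun i =>
    (isLeast_min' _ ⟨p.1 i, self_mem_blocksOf i⟩).unique (isLeast_blocksOf p.2.2.excess_zero_lt i)

/-- The cycle lemma of Dvoretzky and Motzkin. -/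
lemma existsUnique_cycle_start {f : ℕ → ℤ} {n : ℕ} (hn : 0 < n)
    (hf : ∀ t, f (t + n) = f t - 1) : ∃! c, c < n ∧ ∀ t < n, f c ≤ f (c + t) := by
  classical
  obtain ⟨c₀, hc₀, hc₀min⟩ := (range n).exists_min_image f (nonempty_range_iff.2 hn.ne')
  have hex : ∃ c, c < n ∧ ∀ t < n, f c ≤ f t :=
    ⟨c₀, mem_range.1 hc₀, fun t ht => hc₀min t (mem_range.2 ht)⟩
  obtain ⟨hcn, hcmin⟩ := Nat.find_spec hex
  have hgood : ∀ t < n, f (Nat.find hex) ≤ f (Nat.find hex + t) := fun t ht => by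
    by_cases hct : Nat.find hex + t < n
    · exact hcmin _ hct
    · -- after wrapping around, `f` is below every value taken before the first minimiser
      have hs := Nat.find_min hex (m := Nat.find hex + t - n) (by omega)
      simp only [not_and, not_forall, not_le] at hs
      obtain ⟨t', ht', hlt⟩ := hs (by omega)
      rw [show Nat.find hex + t = Nat.find hex + t - n + n by omega, hf]
      have := hcmin t' ht'
      omega
  have hunique : ∀ a b, a < b → b < n → (∀ t < n, f a ≤ f (a + t)) →
      (∀ t < n, f b ≤ f (b + t)) → False := fun a b hab hbn ha hb => by
    have h₁ := ha (b - a) (by omega)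
    have h₂ := hb (a + n - b) (by omega)
    rw [show a + (b - a) = b by omega] at h₁
    rw [show b + (a + n - b) = a + n by omega, hf] at h₂
    omega
  refine ⟨Nat.find hex, ⟨hcn, hgood⟩, fun c ⟨hc, hcgood⟩ => ?_⟩
  rcases lt_trichotomy c (Nat.find hex) with hlt | heq | hlt
  · exact (hunique _ _ hlt hcn hcgood hgood).elim
  · exact heq
  · exact (hunique _ _ hlt hc hgood hcgood).elim

section Rotation

variable {n : ℕ} (w : Fin k → ℕ) (r : Fin k → Fin n)

/-- The excess of `r`, read periodically around `ℤ/n`. -/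
def cyclicExcess (t : ℕ) : ℤ :=
  ∑ x ∈ range t, (∑ i with (r i : ℕ) = x % n, (w i : ℤ) - 1)

lemma cyclicExcess_succ (t : ℕ) :
    cyclicExcess w r (t + 1) =
      cyclicExcess w r t + ∑ i with (r i : ℕ) = t % n, (w i : ℤ) - 1 := by
  rw [cyclicExcess, sum_range_succ, ← cyclicExcess]
  ring

lemma excess_rotate [NeZero n] (c : Fin n) {t : ℕ} (ht : t ≤ n) :
    excess w (fun i => (r i - c : Fin n)) t = cyclicExcess w r (c + t) - cyclicExcess w r c := by
  induction t with
  | zero => simp [cyclicExcess]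
  | succ t ih =>
    have hfilter : ({i | ((r i - c : Fin n) : ℕ) = t} : Finset (Fin k))
        = ({i | (r i : ℕ) = (c + t) % n} : Finset (Fin k)) := by
      ext i
      have := sub_eq_iff_eq_add' (a := r i) (b := c) (c := ⟨t, ht⟩)
      simpa only [Fin.ext_iff, Fin.val_add, mem_filter, mem_univ, true_and] using this
    rw [excess_succ, ih (by omega), hfilter, ← add_assoc, cyclicExcess_succ]
    ring

lemma cyclicExcess_add_period [NeZero n] (t : ℕ) :
    cyclicExcess w r (t + n) = cyclicExcess w r t + (∑ i, (w i : ℤ) - n) := by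
  induction t with
  | zero =>
    have h := excess_rotate w r 0 le_rfl
    rw [excess_of_forall_lt fun i => (r i - 0).isLt] at h
    simpa [cyclicExcess] using h.symm
  | succ t ih =>
    rw [show t + 1 + n = t + n + 1 by omega, cyclicExcess_succ, ih, Nat.add_mod_right,
      cyclicExcess_succ]
    ring

end Rotation

def IsCycleStart {m : ℕ} (w : Fin k → ℕ) (r : Fin k → Fin (m + 1)) (c : Fin (m + 1)) : Prop :=
  ∀ t < m + 1, cyclicExcess w r c ≤ cyclicExcess w r (c + t)

section Shift

variable {m : ℕ} {w : Fin k → ℕ}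

lemma existsUnique_isCycleStart (hsum : ∑ i, w i = m) (r : Fin k → Fin (m + 1)) :
    ∃! c, IsCycleStart w r c := by
  have hperiod : ∀ t, cyclicExcess w r (t + (m + 1)) = cyclicExcess w r t - 1 := fun t => by
    rw [cyclicExcess_add_period, ← Nat.cast_sum, hsum]
    push_cast
    ring
  obtain ⟨c, ⟨hc, hstart⟩, huniq⟩ := existsUnique_cycle_start (Nat.succ_pos m) hperiod
  exact ⟨⟨c, hc⟩, hstart, fun c' hc' => Fin.ext (huniq c' ⟨c'.isLt, hc'⟩)⟩

lemma isCycleStart_iff (hw : ∀ i, 0 < w i) (hsum : ∑ i, w i = m) (r : Fin k → Fin (m + 1))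
    (c : Fin (m + 1)) :
    IsCycleStart w r c ↔
      (∀ i, ((r i - c : Fin (m + 1)) : ℕ) < m) ∧
        IsAdmissible w m fun i => (r i - c : Fin (m + 1)) := by
  rw [← excess_nonneg_iff hw hsum fun i => Fin.is_le _]
  refine forall_congr' fun t => ⟨fun h ht => ?_, fun h ht => ?_⟩
  · rw [excess_rotate w r c (by omega)]
    linarith [h (by omega)]
  · have := h (by omega)
    rw [excess_rotate w r c (by omega)] at this
    linarith

def shift (c : Fin (m + 1)) (p : Fin k → Fin m) : Fin k → Fin (m + 1) :=
  fun i => c + (p i).castSucc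

lemma shift_sub (c : Fin (m + 1)) (p : Fin k → Fin m) (i : Fin k) :
    ((shift c p i - c : Fin (m + 1)) : ℕ) = p i := by
  simp [shift]

lemma injective_shift (c : Fin (m + 1)) {p : Fin k → Fin m} (hp : Function.Injective p) :
    Function.Injective (shift c p) :=
  fun _ _ h => hp (Fin.castSucc_injective m (add_left_cancel h))

lemma isCycleStart_shift (hw : ∀ i, 0 < w i) (hsum : ∑ i, w i = m) (c : Fin (m + 1))
    {p : Fin k → Fin m} (hp : IsAdmissible w m fun i => p i) :
    IsCycleStart w (shift c p) c := by
  rw [isCycleStart_iff hw hsum]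
  simpa only [shift_sub] using ⟨fun i => (p i).isLt, hp⟩

lemma bijective_shift (hw : ∀ i, 0 < w i) (hsum : ∑ i, w i = m) :
    Function.Bijective fun cp : Fin (m + 1) ×
        {p : Fin k → Fin m // Function.Injective p ∧ IsAdmissible w m fun i => p i} =>
      (⟨shift cp.1 cp.2.1, injective_shift cp.1 cp.2.2.1⟩ :
        {r : Fin k → Fin (m + 1) // Function.Injective r}) := by
  constructor
  · rintro ⟨c, p, hp, hadm⟩ ⟨c', p', hp', hadm'⟩ h
    have hr : shift c p = shift c' p' := congrArg Subtype.val h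
    have hc : c = c' := (existsUnique_isCycleStart hsum (shift c p)).unique
      (isCycleStart_shift hw hsum c hadm) (hr ▸ isCycleStart_shift hw hsum c' hadm')
    subst hc
    have hpp : p = p' := funext fun i => Fin.castSucc_injective m (add_left_cancel (congrFun hr i))
    subst hpp
    rfl
  · rintro ⟨r, hr⟩
    obtain ⟨c, hc, -⟩ := existsUnique_isCycleStart hsum r
    obtain ⟨hlt, hadm⟩ := (isCycleStart_iff hw hsum r c).1 hc
    refine ⟨(c, ⟨fun i => ⟨_, hlt i⟩, fun a b hab => hr ?_, hadm⟩),
      Subtype.ext (funext fun i => ?_)⟩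
    · exact sub_left_inj.1 (Fin.ext (by simpa using congrArg Fin.val hab))
    · simp [shift]

lemma card_admissible (hw : ∀ i, 0 < w i) (hsum : ∑ i, w i = m) (hk : 1 ≤ k) :
    Nat.card {p : Fin k → Fin m // Function.Injective p ∧ IsAdmissible w m fun i => p i} =
      m.descFactorial (k - 1) := by
  have h := Nat.card_congr (Equiv.ofBijective _ (bijective_shift hw hsum))
  rw [Nat.card_prod, Nat.card_fin, Nat.card_congr (Equiv.subtypeInjectiveEquivEmbedding _ _),
    Nat.card_eq_fintype_card (α := Fin k ↪ Fin (m + 1)), Fintype.card_embedding_eq,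
    Fintype.card_fin, Fintype.card_fin] at h
  obtain ⟨j, rfl⟩ : ∃ j, k = j + 1 := ⟨k - 1, by omega⟩
  rw [Nat.succ_descFactorial_succ] at h
  exact Nat.eq_of_mul_eq_mul_left m.succ_pos h

end Shift

end NonCrossing

/-- **Counting labelled non-crossing partitions with prescribed block sizes.** For
`m ≥ k ≥ 1` and positive integers `m_1 + ⋯ + m_k = m`, the number of ordered `k`-tuples
`(V_1,…,V_k)` of pairwise disjoint nonempty subsets of `{1,…,m}` with union `{1,…,m}`,
`|V_i| = m_i`, forming a non-crossing partition, is `m!/(m−k+1)!` — independently of the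
cardinalities `m_1,…,m_k`. -/
theorem card_labelled_noncrossing_partitions
    (m k : ℕ) (hk : 1 ≤ k) (hkm : k ≤ m)
    (msize : Fin k → ℕ) (hpos : ∀ i, 0 < msize i) (hsum : ∑ i, msize i = m) :
    Nat.card {V : Fin k → Finset (Fin m) //
        (∀ i, (V i).Nonempty) ∧
        (∀ i j, i ≠ j → Disjoint (V i) (V j)) ∧
        (∀ x : Fin m, ∃ i, x ∈ V i) ∧
        (∀ i, (V i).card = msize i) ∧
        IsNonCrossingFamily V}
      = Nat.factorial m / Nat.factorial (m - k + 1) := by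
  simp_rw [← NonCrossing.isLabelledNCPartition_iff]
  rw [Nat.card_congr (NonCrossing.labelledNCPartitionEquiv hpos hsum),
    NonCrossing.card_admissible hpos hsum hk,
    Nat.descFactorial_eq_div (by omega), show m - (k - 1) = m - k + 1 by omega]
end

section
/- Let (Ω, F, P) be a probability space and Z : Ω → (0,∞) a random variable such that E[Z^δ] < ∞ and E[Z^{−δ}] < ∞ for some δ > 0. Then log Z is integrable and lim_{n→0⁺} ( E[Z^n] − 1 )/n = E[log Z]. -/
open MeasureTheory ProbabilityTheory Filter Topology

/-- `log z ≤ (z^t - 1)/t` for `z, t > 0`. -/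
lemma riesz_aux_log_le {z t : ℝ} (hz : 0 < z) (ht : 0 < t) :
    Real.log z ≤ (z ^ t - 1) / t := by
  rw [le_div_iff₀ ht]
  have h := Real.add_one_le_exp (Real.log z * t)
  rw [Real.rpow_def_of_pos hz]
  linarith

/-- Monotonicity: `(z^n - 1)/n ≤ (z^d - 1)/d` for `0 < n ≤ d`, `z > 0`. -/
lemma riesz_aux_mono {z n d : ℝ} (hz : 0 < z) (hn : 0 < n) (hnd : n ≤ d) :
    (z ^ n - 1) / n ≤ (z ^ d - 1) / d := by
  have hd : 0 < d := lt_of_lt_of_le hn hnd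
  rw [div_le_div_iff₀ hn hd]
  set y := z ^ n with hy
  have hy0 : 0 < y := Real.rpow_pos_of_pos hz n
  have hr : 1 ≤ d / n := (one_le_div hn).mpr hnd
  have hb : 1 + (d / n) * (y - 1) ≤ y ^ (d / n) := by
    have := one_add_mul_self_le_rpow_one_add (by linarith : (-1:ℝ) ≤ y - 1) hr
    simpa using this
  have hyr : y ^ (d / n) = z ^ d := by
    rw [hy, ← Real.rpow_mul hz.le]
    congr 1
    field_simp
  have hmul : n * (d / n) = d := by field_simp
  rw [← hyr]
  nlinarith [hb, hn, hmul]

/-- **The Riesz equality underlying the replica trick.** If `Z > 0` with `E[Z^δ] < ∞` and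
`E[Z^{−δ}] < ∞` for some `δ > 0`, then `log Z` is integrable and
`lim_{n→0⁺} (E[Z^n] − 1)/n = E[log Z]`. -/
theorem riesz_replica_trick
    {Ω : Type*} [MeasureSpace Ω] [IsProbabilityMeasure (ℙ : Measure Ω)]
    (Z : Ω → ℝ) (hZmeas : Measurable Z) (hZpos : ∀ ω, 0 < Z ω)
    (δ : ℝ) (hδ : 0 < δ)
    (hint₁ : Integrable (fun ω => Z ω ^ δ) ℙ)
    (hint₂ : Integrable (fun ω => Z ω ^ (-δ)) ℙ) :
    Integrable (fun ω => Real.log (Z ω)) ℙ ∧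
    Tendsto (fun n : ℝ => ((∫ ω, Z ω ^ n ∂ℙ) - 1) / n) (𝓝[>] 0)
      (𝓝 (∫ ω, Real.log (Z ω) ∂ℙ)) := by
  set B : Ω → ℝ := fun ω => (Z ω ^ δ + Z ω ^ (-δ)) / δ with hBdef
  have hB_int : Integrable B ℙ := (hint₁.add hint₂).div_const δ
  -- bound for log
  have hlog_lower : ∀ ω, -Real.log (Z ω) ≤ (Z ω ^ (-δ) - 1) / δ := by
    intro ω
    have hz := hZpos ω
    have h := riesz_aux_log_le (inv_pos.mpr hz) hδ
    rwa [Real.log_inv, Real.inv_rpow hz.le, ← Real.rpow_neg hz.le] at h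
  have hlogb : ∀ ω, |Real.log (Z ω)| ≤ B ω := by
    intro ω
    have hz := hZpos ω
    have h1 : Real.log (Z ω) ≤ (Z ω ^ δ - 1) / δ := riesz_aux_log_le hz hδ
    have h2 := hlog_lower ω
    have hp1 : 0 < Z ω ^ δ := Real.rpow_pos_of_pos hz δ
    have hp2 : 0 < Z ω ^ (-δ) := Real.rpow_pos_of_pos hz (-δ)
    have h3 : (Z ω ^ (-δ) - 1) / δ ≤ (Z ω ^ δ + Z ω ^ (-δ)) / δ := by gcongr <;> linarith
    have h4 : (Z ω ^ δ - 1) / δ ≤ (Z ω ^ δ + Z ω ^ (-δ)) / δ := by gcongr <;> linarith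
    rw [abs_le, hBdef]
    constructor <;> simp only [] <;> linarith
  have hlog_meas : AEStronglyMeasurable (fun ω => Real.log (Z ω)) ℙ :=
    (Real.measurable_log.comp hZmeas).aestronglyMeasurable
  have hlog_int : Integrable (fun ω => Real.log (Z ω)) ℙ :=
    hB_int.mono' hlog_meas (Filter.Eventually.of_forall fun ω => by
      simpa [Real.norm_eq_abs] using hlogb ω)
  refine ⟨hlog_int, ?_⟩
  -- the dominating function
  set bound : Ω → ℝ := fun ω => B ω + (Z ω ^ δ + 1) / δ with hbddef
  have hbound_int : Integrable bound ℙ :=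
    hB_int.add ((hint₁.add (integrable_const 1)).div_const δ)
  have hev : ∀ᶠ n in 𝓝[>] (0:ℝ), n ∈ Set.Ioc 0 δ := Ioc_mem_nhdsGT hδ
  -- DCT
  have hDCT : Tendsto (fun n : ℝ => ∫ ω, (Z ω ^ n - 1) / n ∂ℙ) (𝓝[>] 0)
      (𝓝 (∫ ω, Real.log (Z ω) ∂ℙ)) := by
    apply tendsto_integral_filter_of_dominated_convergence bound
    · refine Filter.Eventually.of_forall fun n => ?_
      have hmeq : (fun ω => Z ω ^ n) = fun ω => Real.exp (Real.log (Z ω) * n) :=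
        funext fun ω => Real.rpow_def_of_pos (hZpos ω) n
      have hm : Measurable fun ω => Z ω ^ n := by
        rw [hmeq]
        exact Real.measurable_exp.comp ((Real.measurable_log.comp hZmeas).mul_const n)
      exact ((hm.sub measurable_const).div_const n).aestronglyMeasurable
    · filter_upwards [hev] with n hn
      refine Filter.Eventually.of_forall fun ω => ?_
      have hz := hZpos ω
      have h1 : Real.log (Z ω) ≤ (Z ω ^ n - 1) / n := riesz_aux_log_le hz hn.1
      have h2 : (Z ω ^ n - 1) / n ≤ (Z ω ^ δ - 1) / δ := riesz_aux_mono hz hn.1 hn.2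
      have h3 := hlogb ω
      rw [abs_le] at h3
      have hp1 : 0 < Z ω ^ δ := Real.rpow_pos_of_pos hz δ
      have hp2 : 0 < Z ω ^ (-δ) := Real.rpow_pos_of_pos hz (-δ)
      have hBnn : 0 ≤ B ω := by
        rw [hBdef]; positivity
      have h4 : (Z ω ^ δ - 1) / δ ≤ (Z ω ^ δ + 1) / δ := by gcongr <;> linarith
      have h5 : 0 ≤ (Z ω ^ δ + 1) / δ := by positivity
      rw [Real.norm_eq_abs, abs_le, hbddef]
      constructor <;> linarith [h3.1, h3.2]
    · exact hbound_int
    · refine Filter.Eventually.of_forall fun ω => ?_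
      have hz := hZpos ω
      -- derivative of t ↦ z^t at 0 is log z
      have hd : HasDerivAt (fun t : ℝ => Z ω ^ t) (Real.log (Z ω)) 0 := by
        have h2 := (Real.hasDerivAt_exp (Real.log (Z ω) * 0)).comp 0
          ((hasDerivAt_id (0:ℝ)).const_mul (Real.log (Z ω)))
        simp only [mul_zero, Real.exp_zero, mul_one, one_mul] at h2
        apply h2.congr_of_eventuallyEq
        exact Filter.Eventually.of_forall fun t => (Real.rpow_def_of_pos hz t)
      have hslope := hasDerivAt_iff_tendsto_slope.mp hd
      have hmono : 𝓝[>] (0:ℝ) ≤ 𝓝[≠] (0:ℝ) :=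
        nhdsWithin_mono 0 fun x hx => ne_of_gt hx
      have := hslope.mono_left hmono
      refine this.congr fun n => ?_
      simp [slope_def_field, Real.rpow_zero]
  -- rewrite the integrand eventually
  refine Tendsto.congr' ?_ hDCT
  filter_upwards [hev] with n hn
  have hZn_int : Integrable (fun ω => Z ω ^ n) ℙ := by
    have hmeq : (fun ω => Z ω ^ n) = fun ω => Real.exp (Real.log (Z ω) * n) :=
      funext fun ω => Real.rpow_def_of_pos (hZpos ω) n
    have hm : Measurable fun ω => Z ω ^ n := by
      rw [hmeq]
      exact Real.measurable_exp.comp ((Real.measurable_log.comp hZmeas).mul_const n)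
    apply (hint₁.add hint₂).mono' hm.aestronglyMeasurable
    refine Filter.Eventually.of_forall fun ω => ?_
    simp only [Pi.add_apply]
    have hz := hZpos ω
    have hp1 : 0 < Z ω ^ δ := Real.rpow_pos_of_pos hz δ
    have hp2 : 0 < Z ω ^ (-δ) := Real.rpow_pos_of_pos hz (-δ)
    rw [Real.norm_eq_abs, abs_of_pos (Real.rpow_pos_of_pos hz n)]
    rcases le_total 1 (Z ω) with h1 | h1
    · have := Real.rpow_le_rpow_of_exponent_le h1 hn.2
      linarith
    · have := Real.rpow_le_rpow_of_exponent_ge hz h1 (by linarith [hn.1] : -δ ≤ n)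
      linarith
  rw [integral_div, integral_sub hZn_int (integrable_const 1)]
  simp
end
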